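/- arXiv:2504.02201 — 9 statements merged into one kernel-verified Lean document; each statement's English description precedes it below -/
import Mathlib

section
/- Rank-one factorization of the dual slack matrix of the upper-value SDP: assume P* is a symmetric n×n matrix with 𝓡(P*) = 0, and set K* = −R⁻¹BᵀP*, L* = γ⁻²B_wᵀP*, Q* = Q + (K*)ᵀRK*. Then the (n+p)×(n+p) block matrix with blocks [(A+BK*)ᵀP* + P*(A+BK*) + Q*, P*B_w; B_wᵀP*, −γ²I] equals −v vᵀ, where v is the (n+p)×p block matrix [γ(L*)ᵀ; −γI]. In particular, this block matrix is negative semidefinite. -/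
/-!
Substituting `K* = -R⁻¹BᵀP*` turns the closed-loop expression
`(A + BK*)ᵀP* + P*(A + BK*) + Q + K*ᵀRK*` into `AᵀP* + P*A + Q - P*BR⁻¹BᵀP*`, so `𝓡(P*) = 0`
makes the upper-left block `-γ⁻²XXᵀ` with `X = P*B_w = γ²L*ᵀ`. A block matrix
`[-γ⁻²XXᵀ, X; Xᵀ, -γ²I]` is exactly `-vvᵀ` for `v = [γ⁻¹X; -γI]`.
-/

open Matrix

namespace Matrix

variable {α n m p : Type*}

theorem closedLoop_lyapunov_eq_riccati [CommRing α] [Fintype n] [Fintype m] [DecidableEq m]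
    (A P Q : Matrix n n α) (B : Matrix n m α) (R : Matrix m m α) (K : Matrix m n α)
    (hR : IsUnit R.det) (hRsymm : R.IsSymm) (hP : P.IsSymm) (hK : K = -(R⁻¹ * Bᵀ * P)) :
    (A + B * K)ᵀ * P + P * (A + B * K) + (Q + Kᵀ * R * K)
      = Aᵀ * P + P * A + Q - P * B * R⁻¹ * Bᵀ * P := by
  have hKT : Kᵀ = -(P * B * R⁻¹) := by
    rw [hK, transpose_neg, transpose_mul, transpose_mul, transpose_nonsing_inv, hRsymm.eq,
      hP.eq, transpose_transpose, Matrix.mul_assoc]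
  have hKRK : Kᵀ * R * K = P * B * R⁻¹ * Bᵀ * P := by
    rw [hKT, hK, Matrix.neg_mul, Matrix.neg_mul, Matrix.mul_neg, neg_neg]
    simp only [Matrix.mul_assoc, mul_nonsing_inv_cancel_left R _ hR]
  rw [hKRK, transpose_add, transpose_mul, hKT, hK]
  simp only [Matrix.add_mul, Matrix.mul_add, Matrix.neg_mul, Matrix.mul_neg, Matrix.mul_assoc]
  abel

theorem fromBlocks_eq_neg_fromRows_mul_transpose [Field α] [Fintype p] [DecidableEq p]
    {c : α} (hc : c ≠ 0) (X : Matrix n p α) :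
    fromBlocks (-((c ^ 2)⁻¹ • (X * Xᵀ))) X Xᵀ (-(c ^ 2 • (1 : Matrix p p α)))
      = -(fromRows (c⁻¹ • X) (-(c • 1)) * (fromRows (c⁻¹ • X) (-(c • 1)))ᵀ) := by
  rw [transpose_fromRows, fromRows_mul_fromCols, fromBlocks_neg]
  simp only [transpose_smul, transpose_neg, transpose_one, Matrix.smul_mul, Matrix.mul_smul,
    Matrix.mul_neg, Matrix.neg_mul, neg_neg, smul_neg, Matrix.mul_one, Matrix.one_mul, smul_smul,
    inv_mul_cancel₀ hc, mul_inv_cancel₀ hc, one_smul, ← sq, inv_pow, neg_sq, smul_pow, one_pow]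

theorem posSemidef_self_mul_transpose [Fintype n] [Fintype p] (v : Matrix n p ℝ) :
    (v * vᵀ).PosSemidef := by
  simpa using posSemidef_self_mul_conjTranspose v

end Matrix

theorem upper_value_dual_slack_factorization_general {n m p : ℕ}
    (A : Matrix (Fin n) (Fin n) ℝ) (B : Matrix (Fin n) (Fin m) ℝ)
    (Bw : Matrix (Fin n) (Fin p) ℝ)
    (Q : Matrix (Fin n) (Fin n) ℝ)
    (R : Matrix (Fin m) (Fin m) ℝ) (hR : R.PosDef)
    (γ : ℝ) (hγ : 0 < γ)
    (Ps : Matrix (Fin n) (Fin n) ℝ) (hPs : Ps.IsSymm)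
    (hARE : Aᵀ * Ps + Ps * A + Q - Ps * B * R⁻¹ * Bᵀ * Ps
      + (γ ^ 2)⁻¹ • (Ps * Bw * Bwᵀ * Ps) = 0) :
    -- with K* = −R⁻¹BᵀP*, L* = γ⁻²B_wᵀP*, Q* = Q + (K*)ᵀRK*
    (let Ks := -(R⁻¹ * Bᵀ * Ps)
     let Ls := (γ ^ 2)⁻¹ • (Bwᵀ * Ps)
     let Qs := Q + Ksᵀ * R * Ks
     let M : Matrix (Fin n ⊕ Fin p) (Fin n ⊕ Fin p) ℝ :=
       fromBlocks ((A + B * Ks)ᵀ * Ps + Ps * (A + B * Ks) + Qs) (Ps * Bw)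
         (Bwᵀ * Ps) (-(γ ^ 2 • (1 : Matrix (Fin p) (Fin p) ℝ)))
     let v : Matrix (Fin n ⊕ Fin p) (Fin p) ℝ :=
       fromRows (γ • Lsᵀ) (-(γ • (1 : Matrix (Fin p) (Fin p) ℝ)))
     M = -(v * vᵀ) ∧ (-M).PosSemidef) := by
  intro Ks Ls Qs M v
  have hPBwT : (Ps * Bw)ᵀ = Bwᵀ * Ps := by rw [transpose_mul, hPs.eq]
  have hUpperLeft : (A + B * Ks)ᵀ * Ps + Ps * (A + B * Ks) + Qs
      = -((γ ^ 2)⁻¹ • (Ps * Bw * (Ps * Bw)ᵀ)) := by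
    rw [closedLoop_lyapunov_eq_riccati A Ps Q B R Ks ((isUnit_iff_isUnit_det R).mp hR.isUnit)
      (isHermitian_iff_isSymm.mp hR.isHermitian) hPs rfl, hPBwT]
    simpa only [Matrix.mul_assoc] using eq_neg_of_add_eq_zero_left hARE
  have hv : γ • Lsᵀ = γ⁻¹ • (Ps * Bw) := by
    change γ • ((γ ^ 2)⁻¹ • (Bwᵀ * Ps))ᵀ = _
    rw [transpose_smul, ← hPBwT, transpose_transpose, smul_smul, sq, mul_inv, ← mul_assoc,
      mul_inv_cancel₀ hγ.ne', one_mul]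
  have hM : M = -(v * vᵀ) := by
    change fromBlocks _ (Ps * Bw) (Bwᵀ * Ps) _
      = -(fromRows (γ • Lsᵀ) _ * (fromRows (γ • Lsᵀ) _)ᵀ)
    rw [hUpperLeft, hv, ← hPBwT]
    exact fromBlocks_eq_neg_fromRows_mul_transpose hγ.ne' (Ps * Bw)
  exact ⟨hM, by rw [hM, neg_neg]; exact posSemidef_self_mul_transpose v⟩

/-- Rank-one factorization of the dual slack matrix of the upper-value SDP. -/
theorem upper_value_dual_slack_factorization {n m p : ℕ}
    (A : Matrix (Fin n) (Fin n) ℝ) (B : Matrix (Fin n) (Fin m) ℝ)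
    (Bw : Matrix (Fin n) (Fin p) ℝ)
    (Q : Matrix (Fin n) (Fin n) ℝ) (hQ : Q.IsSymm)
    (R : Matrix (Fin m) (Fin m) ℝ) (hR : R.PosDef) (hRsymm : R.IsSymm)
    (γ : ℝ) (hγ : 0 < γ)
    (Ps : Matrix (Fin n) (Fin n) ℝ) (hPs : Ps.IsSymm)
    (hARE : Aᵀ * Ps + Ps * A + Q - Ps * B * R⁻¹ * Bᵀ * Ps
      + (γ ^ 2)⁻¹ • (Ps * Bw * Bwᵀ * Ps) = 0) :
    -- with K* = −R⁻¹BᵀP*, L* = γ⁻²B_wᵀP*, Q* = Q + (K*)ᵀRK*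
    (let Ks := -(R⁻¹ * Bᵀ * Ps)
     let Ls := (γ ^ 2)⁻¹ • (Bwᵀ * Ps)
     let Qs := Q + Ksᵀ * R * Ks
     let M : Matrix (Fin n ⊕ Fin p) (Fin n ⊕ Fin p) ℝ :=
       fromBlocks ((A + B * Ks)ᵀ * Ps + Ps * (A + B * Ks) + Qs) (Ps * Bw)
         (Bwᵀ * Ps) (-(γ ^ 2 • (1 : Matrix (Fin p) (Fin p) ℝ)))
     let v : Matrix (Fin n ⊕ Fin p) (Fin p) ℝ :=
       fromRows (γ • Lsᵀ) (-(γ • (1 : Matrix (Fin p) (Fin p) ℝ)))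
     M = -(v * vᵀ) ∧ (-M).PosSemidef) :=
  upper_value_dual_slack_factorization_general A B Bw Q R hR γ hγ Ps hPs hARE
end

section
/- Dual feasibility of the Riccati solution for the lower-value SDP: assume P* is a symmetric n×n matrix with 𝓡(P*) = 0, and set L* = γ⁻²B_wᵀP*. Then the (n+m)×(n+m) block matrix with blocks [(A+B_wL*)ᵀP* + P*(A+B_wL*) + Q − γ²(L*)ᵀL*, P*B; BᵀP*, R] equals the block matrix [P*BR⁻¹BᵀP*, P*B; BᵀP*, R], and this matrix is positive semidefinite. -/
/-!
Substituting `L* = γ⁻² B_wᵀ P*` into the closed-loop Lyapunov expression gives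
`AᵀP* + P*A + Q + γ⁻² P*B_wB_wᵀP*`, which the Riccati equation identifies with `P*BR⁻¹BᵀP*`.
The resulting block matrix has Schur complement `0` with respect to its positive definite
block `R`, so it is positive semidefinite.
-/

open Matrix

namespace Matrix

theorem PosDef.posSemidef_fromBlocks_mul_inv_mul_conjTranspose {m n R : Type*} [Fintype m]
    [Fintype n] [DecidableEq n] [Field R] [PartialOrder R] [StarRing R] [StarOrderedRing R]
    (C : Matrix m n R) {D : Matrix n n R} (hD : D.PosDef) :
    (fromBlocks (C * D⁻¹ * Cᴴ) C Cᴴ D).PosSemidef := by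
  have := hD.isUnit.invertible
  rw [PosDef.fromBlocks₂₂ _ _ hD, sub_self]
  exact PosSemidef.zero

variable {n p K : Type*} [Fintype n] [Fintype p] [Field K]

theorem closedLoop_lyapunov_eq (A Q P : Matrix n n K) (hP : P.IsSymm) (Bw : Matrix n p K)
    (s : K) :
    (A + Bw * (s⁻¹ • (Bwᵀ * P)))ᵀ * P + P * (A + Bw * (s⁻¹ • (Bwᵀ * P))) + Q
        - s • ((s⁻¹ • (Bwᵀ * P))ᵀ * (s⁻¹ • (Bwᵀ * P)))
      = Aᵀ * P + P * A + Q + s⁻¹ • (P * Bw * Bwᵀ * P) := by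
  have hs : s * (s⁻¹ * s⁻¹) = s⁻¹ := by
    rcases eq_or_ne s 0 with rfl | hs0
    · simp
    · rw [← mul_assoc, mul_inv_cancel₀ hs0, one_mul]
  simp only [transpose_add, transpose_mul, transpose_smul, transpose_transpose, hP.eq, add_mul,
    mul_add, Matrix.smul_mul, Matrix.mul_smul, smul_smul, hs, Matrix.mul_assoc]
  abel

end Matrix

theorem lower_value_dual_feasibility_general {n m p : ℕ}
    (A : Matrix (Fin n) (Fin n) ℝ) (B : Matrix (Fin n) (Fin m) ℝ)
    (Bw : Matrix (Fin n) (Fin p) ℝ)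
    (Q : Matrix (Fin n) (Fin n) ℝ)
    (R : Matrix (Fin m) (Fin m) ℝ) (hR : R.PosDef)
    (γ : ℝ)
    (Ps : Matrix (Fin n) (Fin n) ℝ) (hPs : Ps.IsSymm)
    (hARE : Aᵀ * Ps + Ps * A + Q - Ps * B * R⁻¹ * Bᵀ * Ps
      + (γ ^ 2)⁻¹ • (Ps * Bw * Bwᵀ * Ps) = 0) :
    -- with L* = γ⁻²B_wᵀP*
    (let Ls := (γ ^ 2)⁻¹ • (Bwᵀ * Ps)
     let M : Matrix (Fin n ⊕ Fin m) (Fin n ⊕ Fin m) ℝ :=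
       fromBlocks
         ((A + Bw * Ls)ᵀ * Ps + Ps * (A + Bw * Ls) + Q - γ ^ 2 • (Lsᵀ * Ls))
         (Ps * B) (Bᵀ * Ps) R
     M = fromBlocks (Ps * B * R⁻¹ * Bᵀ * Ps) (Ps * B) (Bᵀ * Ps) R ∧
       M.PosSemidef) := by
  intro Ls M
  have hRiccati : Aᵀ * Ps + Ps * A + Q + (γ ^ 2)⁻¹ • (Ps * Bw * Bwᵀ * Ps)
      = Ps * B * R⁻¹ * Bᵀ * Ps :=
    sub_eq_zero.mp (by rw [← hARE]; abel)
  have hM : M = fromBlocks (Ps * B * R⁻¹ * Bᵀ * Ps) (Ps * B) (Bᵀ * Ps) R := by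
    simp only [M, Ls, closedLoop_lyapunov_eq A Q Ps hPs Bw (γ ^ 2), hRiccati]
  have hBP : Bᵀ * Ps = (Ps * B)ᴴ := by
    rw [conjTranspose_eq_transpose_of_trivial, transpose_mul, hPs.eq]
  refine ⟨hM, ?_⟩
  rw [hM, Matrix.mul_assoc (Ps * B * R⁻¹), hBP]
  exact hR.posSemidef_fromBlocks_mul_inv_mul_conjTranspose (Ps * B)

/-- Dual feasibility of the Riccati solution for the lower-value SDP. -/
theorem lower_value_dual_feasibility {n m p : ℕ}
    (A : Matrix (Fin n) (Fin n) ℝ) (B : Matrix (Fin n) (Fin m) ℝ)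
    (Bw : Matrix (Fin n) (Fin p) ℝ)
    (Q : Matrix (Fin n) (Fin n) ℝ) (hQ : Q.IsSymm)
    (R : Matrix (Fin m) (Fin m) ℝ) (hR : R.PosDef) (hRsymm : R.IsSymm)
    (γ : ℝ) (hγ : 0 < γ)
    (Ps : Matrix (Fin n) (Fin n) ℝ) (hPs : Ps.IsSymm)
    (hARE : Aᵀ * Ps + Ps * A + Q - Ps * B * R⁻¹ * Bᵀ * Ps
      + (γ ^ 2)⁻¹ • (Ps * Bw * Bwᵀ * Ps) = 0) :
    -- with L* = γ⁻²B_wᵀP*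
    (let Ls := (γ ^ 2)⁻¹ • (Bwᵀ * Ps)
     let M : Matrix (Fin n ⊕ Fin m) (Fin n ⊕ Fin m) ℝ :=
       fromBlocks
         ((A + Bw * Ls)ᵀ * Ps + Ps * (A + Bw * Ls) + Q - γ ^ 2 • (Lsᵀ * Ls))
         (Ps * B) (Bᵀ * Ps) R
     M = fromBlocks (Ps * B * R⁻¹ * Bᵀ * Ps) (Ps * B) (Bᵀ * Ps) R ∧
       M.PosSemidef) :=
  lower_value_dual_feasibility_general A B Bw Q R hR γ Ps hPs hARE
end

section
/- Upper bound on the upper-value SDP (Proposition 3, upper half): assume P* is a symmetric n×n matrix with 𝓡(P*) = 0, and set K* = −R⁻¹BᵀP*, Q* = Q + (K*)ᵀRK*. Fix x_0 ∈ ℝⁿ. Then every symmetric positive semidefinite (n+p)×(n+p) matrix Z, partitioned into blocks Z₁₁ (n×n), Z₁₂ (n×p), Z₂₂ (p×p), that satisfies x_0x_0ᵀ + (A+BK*)Z₁₁ + B_wZ₁₂ᵀ + Z₁₁(A+BK*)ᵀ + Z₁₂B_wᵀ = 0 obeys Tr(Q* Z₁₁) − γ² Tr(Z₂₂) ≤ x_0ᵀP*x_0.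 -/
/-!
With the gain `K = -R⁻¹BᵀP` the Riccati equation becomes the closed-loop Lyapunov identity
`P(A + BK) + (A + BK)ᵀP = -(Q + KᵀRK) - γ⁻² P B_w B_wᵀ P`. Pairing the SDP constraint with `P`
in the trace inner product therefore gives
`Tr(Q* Z₁₁) = x₀ᵀPx₀ - γ⁻² Tr(MᵀZ₁₁M) + 2 Tr(MᵀZ₁₂)` with `M = PB_w`, and the remaining
terms `2 Tr(MᵀZ₁₂) - γ⁻² Tr(MᵀZ₁₁M) - γ² Tr Z₂₂` are `-γ⁻² Tr(WᵀZW) ≤ 0` for the block column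
`W = [M; -γ²I]`: a completion of squares.
-/

open Matrix

namespace Matrix

variable {n p : Type*} [Fintype n] [Fintype p]

lemma trace_mul_vecMulVec_self (P : Matrix n n ℝ) (x : n → ℝ) :
    (P * vecMulVec x x).trace = x ⬝ᵥ P *ᵥ x := by
  rw [mul_vecMulVec, trace_vecMulVec, dotProduct_comm]

lemma PosSemidef.fromBlocks_cross_trace_le [DecidableEq p] {Z₁₁ : Matrix n n ℝ}
    {Z₁₂ : Matrix n p ℝ} {Z₂₂ : Matrix p p ℝ} (hZ : (fromBlocks Z₁₁ Z₁₂ Z₁₂ᵀ Z₂₂).PosSemidef)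
    (M : Matrix n p ℝ) (c : ℝ) :
    2 * c * (Mᵀ * Z₁₂).trace ≤ (Mᵀ * Z₁₁ * M).trace + c ^ 2 * Z₂₂.trace := by
  have h := (hZ.conjTranspose_mul_mul_same (fromRows M (-c • 1))).trace_nonneg
  rw [conjTranspose_eq_transpose_of_trivial, transpose_fromRows, fromCols_mul_fromBlocks,
    fromCols_mul_fromRows] at h
  have hsymm : (Z₁₂ᵀ * M).trace = (Mᵀ * Z₁₂).trace := by
    rw [← trace_transpose, transpose_mul, transpose_transpose]
  simp only [transpose_smul, transpose_one, Matrix.add_mul, Matrix.smul_mul, Matrix.mul_smul,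
    Matrix.one_mul, Matrix.mul_one, trace_add, trace_smul, smul_eq_mul, hsymm] at h
  linarith

lemma PosSemidef.fromBlocks_cross_trace_le_of_pos [DecidableEq p] {Z₁₁ : Matrix n n ℝ}
    {Z₁₂ : Matrix n p ℝ} {Z₂₂ : Matrix p p ℝ} (hZ : (fromBlocks Z₁₁ Z₁₂ Z₁₂ᵀ Z₂₂).PosSemidef)
    (M : Matrix n p ℝ) {c : ℝ} (hc : 0 < c) :
    2 * (Mᵀ * Z₁₂).trace ≤ c⁻¹ * (Mᵀ * Z₁₁ * M).trace + c * Z₂₂.trace := by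
  have h := hZ.fromBlocks_cross_trace_le M c
  rw [← mul_le_mul_iff_of_pos_left hc]
  calc c * (2 * (Mᵀ * Z₁₂).trace) = 2 * c * (Mᵀ * Z₁₂).trace := by ring
    _ ≤ _ := h
    _ = _ := by field_simp

section Riccati

variable {m : Type*} [Fintype m] [DecidableEq m] {R : Matrix m m ℝ} {P : Matrix n n ℝ}

lemma transpose_neg_inv_mul_transpose_mul (hRsymm : R.IsSymm) (hP : P.IsSymm)
    (B : Matrix n m ℝ) : (-(R⁻¹ * Bᵀ * P))ᵀ = -(P * B * R⁻¹) := by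
  rw [transpose_neg, transpose_mul, transpose_mul, transpose_transpose, transpose_nonsing_inv,
    hRsymm.eq, hP.eq, Matrix.mul_assoc]

lemma gain_transpose_mul_mul_gain (hR : IsUnit R.det) (hRsymm : R.IsSymm) (hP : P.IsSymm)
    (B : Matrix n m ℝ) :
    (-(R⁻¹ * Bᵀ * P))ᵀ * R * (-(R⁻¹ * Bᵀ * P)) = P * B * R⁻¹ * Bᵀ * P := by
  rw [transpose_neg_inv_mul_transpose_mul hRsymm hP, Matrix.neg_mul, Matrix.neg_mul,
    Matrix.mul_neg, neg_neg, Matrix.mul_assoc (P * B * R⁻¹), ← Matrix.mul_assoc R,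
    ← Matrix.mul_assoc R, mul_nonsing_inv R hR, Matrix.one_mul]
  simp only [Matrix.mul_assoc]

lemma closedLoop_lyapunov_of_riccati (hR : IsUnit R.det) (hRsymm : R.IsSymm) (hP : P.IsSymm)
    (A Q : Matrix n n ℝ) (B : Matrix n m ℝ) (G : Matrix n n ℝ) (c : ℝ)
    (hARE : Aᵀ * P + P * A + Q - P * B * R⁻¹ * Bᵀ * P + c • G = 0) :
    P * (A + B * (-(R⁻¹ * Bᵀ * P))) + (A + B * (-(R⁻¹ * Bᵀ * P)))ᵀ * P
      = -(Q + (-(R⁻¹ * Bᵀ * P))ᵀ * R * (-(R⁻¹ * Bᵀ * P))) - c • G := by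
  rw [gain_transpose_mul_mul_gain hR hRsymm hP, transpose_add, transpose_mul,
    transpose_neg_inv_mul_transpose_mul hRsymm hP, ← sub_eq_zero, ← hARE]
  simp only [Matrix.mul_add, Matrix.add_mul, Matrix.mul_neg, Matrix.neg_mul, Matrix.mul_assoc]
  abel

end Riccati

lemma trace_mul_lyapunov_eq_zero {P X Acl Z₁₁ : Matrix n n ℝ} {F Z₁₂ : Matrix n p ℝ}
    (hP : P.IsSymm) (h : X + Acl * Z₁₁ + F * Z₁₂ᵀ + Z₁₁ * Aclᵀ + Z₁₂ * Fᵀ = 0) :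
    (P * X).trace + ((P * Acl + Aclᵀ * P) * Z₁₁).trace + 2 * ((P * F)ᵀ * Z₁₂).trace = 0 := by
  have hTrace := congrArg (fun M => (P * M).trace) h
  simp only [Matrix.mul_add, trace_add, Matrix.mul_zero, trace_zero] at hTrace
  have hF : (P * (F * Z₁₂ᵀ)).trace = ((P * F)ᵀ * Z₁₂).trace := by
    rw [← Matrix.mul_assoc, trace_mul_comm, ← trace_transpose, transpose_mul, transpose_transpose]
  have hF' : (P * (Z₁₂ * Fᵀ)).trace = ((P * F)ᵀ * Z₁₂).trace := by
    rw [transpose_mul, hP.eq, ← Matrix.mul_assoc, trace_mul_cycle]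
  have hAcl : (P * (Z₁₁ * Aclᵀ)).trace = (Aclᵀ * P * Z₁₁).trace := by
    rw [← Matrix.mul_assoc, trace_mul_comm, Matrix.mul_assoc]
  rw [Matrix.add_mul, trace_add, Matrix.mul_assoc P Acl]
  linarith

end Matrix

theorem upper_value_sdp_bound_general {n m p : ℕ}
    (A : Matrix (Fin n) (Fin n) ℝ) (B : Matrix (Fin n) (Fin m) ℝ)
    (Bw : Matrix (Fin n) (Fin p) ℝ)
    (Q : Matrix (Fin n) (Fin n) ℝ)
    (R : Matrix (Fin m) (Fin m) ℝ) (hR : R.PosDef) (hRsymm : R.IsSymm)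
    (γ : ℝ) (hγ : 0 < γ)
    (Ps : Matrix (Fin n) (Fin n) ℝ) (hPs : Ps.IsSymm)
    (hARE : Aᵀ * Ps + Ps * A + Q - Ps * B * R⁻¹ * Bᵀ * Ps
      + (γ ^ 2)⁻¹ • (Ps * Bw * Bwᵀ * Ps) = 0)
    (x0 : Fin n → ℝ)
    (Z₁₁ : Matrix (Fin n) (Fin n) ℝ) (Z₁₂ : Matrix (Fin n) (Fin p) ℝ)
    (Z₂₂ : Matrix (Fin p) (Fin p) ℝ)
    (hZ : (fromBlocks Z₁₁ Z₁₂ Z₁₂ᵀ Z₂₂).PosSemidef)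
    (hfeas : vecMulVec x0 x0 + (A + B * (-(R⁻¹ * Bᵀ * Ps))) * Z₁₁ + Bw * Z₁₂ᵀ
      + Z₁₁ * (A + B * (-(R⁻¹ * Bᵀ * Ps)))ᵀ + Z₁₂ * Bwᵀ = 0) :
    ((Q + (-(R⁻¹ * Bᵀ * Ps))ᵀ * R * (-(R⁻¹ * Bᵀ * Ps))) * Z₁₁).trace
      - γ ^ 2 * Z₂₂.trace ≤ x0 ⬝ᵥ Ps *ᵥ x0 := by
  have hRdet : IsUnit R.det := (isUnit_iff_isUnit_det R).mp hR.isUnit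
  have hLyap := closedLoop_lyapunov_of_riccati hRdet hRsymm hPs A Q B _ _ hARE
  have hPair := trace_mul_lyapunov_eq_zero hPs hfeas
  have hSquare := hZ.fromBlocks_cross_trace_le_of_pos (Ps * Bw) (pow_pos hγ 2)
  have hCross : (Ps * Bw * Bwᵀ * Ps * Z₁₁).trace = ((Ps * Bw)ᵀ * Z₁₁ * (Ps * Bw)).trace := by
    rw [transpose_mul, hPs.eq, trace_mul_comm (Bwᵀ * Ps * Z₁₁)]
    simp only [Matrix.mul_assoc]
  rw [hLyap, trace_mul_vecMulVec_self, Matrix.sub_mul, Matrix.neg_mul, trace_sub, trace_neg,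
    Matrix.smul_mul, trace_smul, smul_eq_mul, hCross] at hPair
  linarith

/-- Upper bound on the upper-value SDP (Proposition 3, upper half). -/
theorem upper_value_sdp_bound {n m p : ℕ}
    (A : Matrix (Fin n) (Fin n) ℝ) (B : Matrix (Fin n) (Fin m) ℝ)
    (Bw : Matrix (Fin n) (Fin p) ℝ)
    (Q : Matrix (Fin n) (Fin n) ℝ) (hQ : Q.IsSymm)
    (R : Matrix (Fin m) (Fin m) ℝ) (hR : R.PosDef) (hRsymm : R.IsSymm)
    (γ : ℝ) (hγ : 0 < γ)
    (Ps : Matrix (Fin n) (Fin n) ℝ) (hPs : Ps.IsSymm)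
    (hARE : Aᵀ * Ps + Ps * A + Q - Ps * B * R⁻¹ * Bᵀ * Ps
      + (γ ^ 2)⁻¹ • (Ps * Bw * Bwᵀ * Ps) = 0)
    (x0 : Fin n → ℝ)
    (Z₁₁ : Matrix (Fin n) (Fin n) ℝ) (Z₁₂ : Matrix (Fin n) (Fin p) ℝ)
    (Z₂₂ : Matrix (Fin p) (Fin p) ℝ)
    (hZ : (fromBlocks Z₁₁ Z₁₂ Z₁₂ᵀ Z₂₂).PosSemidef)
    (hfeas : vecMulVec x0 x0 + (A + B * (-(R⁻¹ * Bᵀ * Ps))) * Z₁₁ + Bw * Z₁₂ᵀ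
      + Z₁₁ * (A + B * (-(R⁻¹ * Bᵀ * Ps)))ᵀ + Z₁₂ * Bwᵀ = 0) :
    ((Q + (-(R⁻¹ * Bᵀ * Ps))ᵀ * R * (-(R⁻¹ * Bᵀ * Ps))) * Z₁₁).trace
      - γ ^ 2 * Z₂₂.trace ≤ x0 ⬝ᵥ Ps *ᵥ x0 :=
  upper_value_sdp_bound_general A B Bw Q R hR hRsymm γ hγ Ps hPs hARE x0 Z₁₁ Z₁₂ Z₂₂ hZ hfeas
end

section
/- Complementary slackness for the upper-value SDP: assume P* is a symmetric n×n matrix with 𝓡(P*) = 0, and set K* = −R⁻¹BᵀP*, L* = γ⁻²B_wᵀP*, Q* = Q + (K*)ᵀRK*. Then for every symmetric n×n matrix Z₁₁, the matrix Z* = [I; L*] Z₁₁ [I; L*]ᵀ (an (n+p)×(n+p) matrix) satisfies Tr( Z* · M ) = 0, where M is the block matrix [(A+BK*)ᵀP* + P*(A+BK*) + Q*, P*B_w; B_wᵀP*, −γ²I]. -/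
open Matrix

/-!
Writing `Z* = S Z₁₁ Sᵀ` with `S = [I; L*]`, cyclicity of the trace gives
`Tr (Z* M) = Tr (Z₁₁ · Sᵀ M S)`, and the congruence `Sᵀ M S` is exactly `𝓡(P*)`:
substituting `K* = -R⁻¹BᵀP*` completes the square in the control and turns the upper-left block
into `AᵀP* + P*A + Q - P*BR⁻¹BᵀP*`, while the worst-case disturbance `L* = γ⁻²BwᵀP*` makes the
remaining blocks contribute `γ⁻²P*BwBwᵀP*`.
-/

section

variable {ι κ α : Type*} [Fintype ι] [Fintype κ]

theorem trace_mul_mul_mul_mul_comm [CommSemiring α] (S : Matrix ι κ α) (Z : Matrix κ κ α)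
    (T : Matrix κ ι α) (M : Matrix ι ι α) :
    trace (S * Z * T * M) = trace (Z * (T * M * S)) := by
  rw [Matrix.mul_assoc, Matrix.mul_assoc, trace_mul_comm, Matrix.mul_assoc, Matrix.mul_assoc]

theorem fromRows_one_transpose_mul_fromBlocks_mul_fromRows_one [DecidableEq ι] [CommSemiring α]
    (L : Matrix κ ι α) (M₁₁ : Matrix ι ι α) (M₁₂ : Matrix ι κ α) (M₂₁ : Matrix κ ι α)
    (M₂₂ : Matrix κ κ α) :
    (fromRows (1 : Matrix ι ι α) L)ᵀ * (fromBlocks M₁₁ M₁₂ M₂₁ M₂₂ : Matrix (ι ⊕ κ) (ι ⊕ κ) α)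
        * fromRows (1 : Matrix ι ι α) L
      = M₁₁ + M₁₂ * L + Lᵀ * M₂₁ + Lᵀ * M₂₂ * L := by
  rw [transpose_fromRows, Matrix.mul_assoc, fromBlocks_mul_fromRows, fromCols_mul_fromRows]
  simp only [transpose_one, Matrix.one_mul, Matrix.mul_one, Matrix.mul_add, Matrix.mul_assoc]
  abel

end

section

variable {ι μ κ α : Type*} [Fintype ι] [Fintype μ] [Fintype κ]

theorem closedLoop_lyapunov_add_optimalCost_eq [DecidableEq μ] [CommRing α]
    {P : Matrix ι ι α} (hP : Pᵀ = P) (A Q : Matrix ι ι α) (B : Matrix ι μ α)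
    {R : Matrix μ μ α} (hR : IsUnit R.det) :
    (A + B * -(R⁻¹ * Bᵀ * P))ᵀ * P + P * (A + B * -(R⁻¹ * Bᵀ * P))
        + (Q + (-(R⁻¹ * Bᵀ * P))ᵀ * R * -(R⁻¹ * Bᵀ * P))
      = Aᵀ * P + P * A + Q - P * B * R⁻¹ * Bᵀ * P := by
  simp only [transpose_add, transpose_mul, transpose_neg, transpose_transpose, hP,
    Matrix.add_mul, Matrix.mul_add, Matrix.neg_mul, Matrix.mul_neg, neg_neg, Matrix.mul_assoc,
    mul_nonsing_inv_cancel_left _ _ hR]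
  abel

theorem worstCaseDisturbance_terms_eq [DecidableEq κ] [Field α] {P : Matrix ι ι α} (hP : Pᵀ = P)
    (Bw : Matrix ι κ α) (c : α) :
    P * Bw * (c⁻¹ • (Bwᵀ * P)) + (c⁻¹ • (Bwᵀ * P))ᵀ * (Bwᵀ * P)
        + (c⁻¹ • (Bwᵀ * P))ᵀ * -(c • (1 : Matrix κ κ α)) * (c⁻¹ • (Bwᵀ * P))
      = c⁻¹ • (P * Bw * Bwᵀ * P) := by
  have hc : c⁻¹ * (c * c⁻¹) = c⁻¹ := by
    simpa only [inv_inv, mul_assoc] using mul_inv_mul_cancel c⁻¹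
  simp only [transpose_smul, transpose_mul, transpose_transpose, hP, Matrix.smul_mul,
    Matrix.mul_smul, Matrix.neg_mul, Matrix.mul_neg, Matrix.mul_one, smul_neg, smul_smul, hc,
    Matrix.mul_assoc]
  abel

end

theorem upper_value_complementary_slackness_general {n m p : ℕ}
    (A : Matrix (Fin n) (Fin n) ℝ) (B : Matrix (Fin n) (Fin m) ℝ)
    (Bw : Matrix (Fin n) (Fin p) ℝ)
    (Q : Matrix (Fin n) (Fin n) ℝ)
    (R : Matrix (Fin m) (Fin m) ℝ) (hR : R.PosDef)
    (γ : ℝ)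
    (Ps : Matrix (Fin n) (Fin n) ℝ) (hPs : Ps.IsSymm)
    (hARE : Aᵀ * Ps + Ps * A + Q - Ps * B * R⁻¹ * Bᵀ * Ps
      + (γ ^ 2)⁻¹ • (Ps * Bw * Bwᵀ * Ps) = 0)
    (Z₁₁ : Matrix (Fin n) (Fin n) ℝ) :
    (let Ks := -(R⁻¹ * Bᵀ * Ps)
     let Ls := (γ ^ 2)⁻¹ • (Bwᵀ * Ps)
     let Qs := Q + Ksᵀ * R * Ks
     let S : Matrix (Fin n ⊕ Fin p) (Fin n) ℝ :=
       fromRows (1 : Matrix (Fin n) (Fin n) ℝ) Ls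
     let Zs := S * Z₁₁ * Sᵀ
     let M : Matrix (Fin n ⊕ Fin p) (Fin n ⊕ Fin p) ℝ :=
       fromBlocks ((A + B * Ks)ᵀ * Ps + Ps * (A + B * Ks) + Qs) (Ps * Bw)
         (Bwᵀ * Ps) (-(γ ^ 2 • (1 : Matrix (Fin p) (Fin p) ℝ)))
     (Zs * M).trace = 0) := by
  intro Ks Ls Qs S Zs M
  have hRdet : IsUnit R.det := (isUnit_iff_isUnit_det R).mp hR.isUnit
  have hcongr : Sᵀ * M * S = 0 := by
    rw [fromRows_one_transpose_mul_fromBlocks_mul_fromRows_one, add_assoc, add_assoc,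
      ← add_assoc (Ps * Bw * Ls), worstCaseDisturbance_terms_eq hPs,
      closedLoop_lyapunov_add_optimalCost_eq hPs _ _ _ hRdet, hARE]
  show trace (S * Z₁₁ * Sᵀ * M) = 0
  rw [trace_mul_mul_mul_mul_comm, hcongr, Matrix.mul_zero, trace_zero]

/-- Complementary slackness for the upper-value SDP. -/
theorem upper_value_complementary_slackness {n m p : ℕ}
    (A : Matrix (Fin n) (Fin n) ℝ) (B : Matrix (Fin n) (Fin m) ℝ)
    (Bw : Matrix (Fin n) (Fin p) ℝ)
    (Q : Matrix (Fin n) (Fin n) ℝ) (hQ : Q.IsSymm)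
    (R : Matrix (Fin m) (Fin m) ℝ) (hR : R.PosDef) (hRsymm : R.IsSymm)
    (γ : ℝ) (hγ : 0 < γ)
    (Ps : Matrix (Fin n) (Fin n) ℝ) (hPs : Ps.IsSymm)
    (hARE : Aᵀ * Ps + Ps * A + Q - Ps * B * R⁻¹ * Bᵀ * Ps
      + (γ ^ 2)⁻¹ • (Ps * Bw * Bwᵀ * Ps) = 0)
    (Z₁₁ : Matrix (Fin n) (Fin n) ℝ) (hZ₁₁ : Z₁₁.IsSymm) :
    (let Ks := -(R⁻¹ * Bᵀ * Ps)
     let Ls := (γ ^ 2)⁻¹ • (Bwᵀ * Ps)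
     let Qs := Q + Ksᵀ * R * Ks
     let S : Matrix (Fin n ⊕ Fin p) (Fin n) ℝ :=
       fromRows (1 : Matrix (Fin n) (Fin n) ℝ) Ls
     let Zs := S * Z₁₁ * Sᵀ
     let M : Matrix (Fin n ⊕ Fin p) (Fin n ⊕ Fin p) ℝ :=
       fromBlocks ((A + B * Ks)ᵀ * Ps + Ps * (A + B * Ks) + Qs) (Ps * Bw)
         (Bwᵀ * Ps) (-(γ ^ 2 • (1 : Matrix (Fin p) (Fin p) ℝ)))
     (Zs * M).trace = 0) :=
  upper_value_complementary_slackness_general A B Bw Q R hR γ Ps hPs hARE Z₁₁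
end

section
/- Primal attainment for the upper-value SDP at the Riccati value: assume P* is a symmetric n×n matrix with 𝓡(P*) = 0, set K* = −R⁻¹BᵀP*, L* = γ⁻²B_wᵀP*, Q* = Q + (K*)ᵀRK*, and fix x_0 ∈ ℝⁿ. If Z₁₁ is a symmetric positive semidefinite n×n matrix satisfying the closed-loop Lyapunov equation x_0x_0ᵀ + (A+BK*+B_wL*)Z₁₁ + Z₁₁(A+BK*+B_wL*)ᵀ = 0, then Z* = [I; L*] Z₁₁ [I; L*]ᵀ is positive semidefinite, its blocks satisfy x_0x_0ᵀ + (A+BK*)Z*₁₁ + B_w(Z*₁₂)ᵀ + Z*₁₁(A+BK*)ᵀ + Z*₁₂B_wᵀ = 0, and Tr(Q* Z*₁₁) − γ² Tr(Z*₂₂) = x_0ᵀP*x_0. -/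
open Matrix

/-- Primal attainment for the upper-value SDP at the Riccati value. -/
theorem upper_value_primal_attainment {n m p : ℕ}
    (A : Matrix (Fin n) (Fin n) ℝ) (B : Matrix (Fin n) (Fin m) ℝ)
    (Bw : Matrix (Fin n) (Fin p) ℝ)
    (Q : Matrix (Fin n) (Fin n) ℝ) (hQ : Q.IsSymm)
    (R : Matrix (Fin m) (Fin m) ℝ) (hR : R.PosDef) (hRsymm : R.IsSymm)
    (γ : ℝ) (hγ : 0 < γ)
    (Ps : Matrix (Fin n) (Fin n) ℝ) (hPs : Ps.IsSymm)
    (hARE : Aᵀ * Ps + Ps * A + Q - Ps * B * R⁻¹ * Bᵀ * Ps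
      + (γ ^ 2)⁻¹ • (Ps * Bw * Bwᵀ * Ps) = 0)
    (x0 : Fin n → ℝ)
    (Z₁₁ : Matrix (Fin n) (Fin n) ℝ) (hZ₁₁ : Z₁₁.PosSemidef)
    (hLyap : vecMulVec x0 x0
      + (A + B * (-(R⁻¹ * Bᵀ * Ps)) + Bw * ((γ ^ 2)⁻¹ • (Bwᵀ * Ps))) * Z₁₁
      + Z₁₁ * (A + B * (-(R⁻¹ * Bᵀ * Ps)) + Bw * ((γ ^ 2)⁻¹ • (Bwᵀ * Ps)))ᵀ = 0) :
    (let Ks := -(R⁻¹ * Bᵀ * Ps)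
     let Ls := (γ ^ 2)⁻¹ • (Bwᵀ * Ps)
     let Qs := Q + Ksᵀ * R * Ks
     let S : Matrix (Fin n ⊕ Fin p) (Fin n) ℝ :=
       fromRows (1 : Matrix (Fin n) (Fin n) ℝ) Ls
     let Zs := S * Z₁₁ * Sᵀ
     Zs.PosSemidef ∧
       (vecMulVec x0 x0 + (A + B * Ks) * Zs.toBlocks₁₁ + Bw * (Zs.toBlocks₁₂)ᵀ
         + Zs.toBlocks₁₁ * (A + B * Ks)ᵀ + Zs.toBlocks₁₂ * Bwᵀ = 0) ∧
       ((Qs * Zs.toBlocks₁₁).trace - γ ^ 2 * (Zs.toBlocks₂₂).trace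
         = x0 ⬝ᵥ Ps *ᵥ x0)) := by
  set K : Matrix (Fin m) (Fin n) ℝ := -(R⁻¹ * Bᵀ * Ps) with hK
  set L : Matrix (Fin p) (Fin n) ℝ := (γ ^ 2)⁻¹ • (Bwᵀ * Ps) with hL
  have hg2 : (γ : ℝ) ^ 2 ≠ 0 := by positivity
  have hdet : IsUnit R.det := isUnit_iff_ne_zero.mpr hR.det_pos.ne'
  have hZsym : Z₁₁ᵀ = Z₁₁ := by
    have h := hZ₁₁.isHermitian
    rwa [Matrix.IsHermitian, conjTranspose_eq_transpose_of_trivial] at h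
  have hRinv : R⁻¹ᵀ = R⁻¹ := by
    rw [Matrix.transpose_nonsing_inv, hRsymm.eq]
  have hKt : Kᵀ = -(Ps * B * R⁻¹) := by
    simp [hK, transpose_mul, hPs.eq, hRinv, Matrix.mul_assoc]
  have hLt : Lᵀ = (γ ^ 2)⁻¹ • (Ps * Bw) := by
    simp [hL, transpose_smul, transpose_mul, hPs.eq]
  -- block decomposition of Zs
  have hZs : fromRows (1 : Matrix (Fin n) (Fin n) ℝ) L * Z₁₁ *
      (fromRows (1 : Matrix (Fin n) (Fin n) ℝ) L)ᵀ
      = fromBlocks Z₁₁ (Z₁₁ * Lᵀ) (L * Z₁₁) (L * Z₁₁ * Lᵀ) := by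
    rw [transpose_fromRows, fromRows_mul, fromRows_mul_fromCols]
    simp
  refine ⟨?_, ?_, ?_⟩
  · -- positive semidefiniteness
    have h := hZ₁₁.mul_mul_conjTranspose_same (fromRows (1 : Matrix (Fin n) (Fin n) ℝ) L)
    rwa [conjTranspose_eq_transpose_of_trivial] at h
  · -- Lyapunov block equation
    show vecMulVec x0 x0
        + (A + B * K) * (fromRows 1 L * Z₁₁ * (fromRows 1 L)ᵀ).toBlocks₁₁
        + Bw * ((fromRows 1 L * Z₁₁ * (fromRows 1 L)ᵀ).toBlocks₁₂)ᵀ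
        + (fromRows 1 L * Z₁₁ * (fromRows 1 L)ᵀ).toBlocks₁₁ * (A + B * K)ᵀ
        + (fromRows 1 L * Z₁₁ * (fromRows 1 L)ᵀ).toBlocks₁₂ * Bwᵀ = 0
    rw [hZs]
    simp only [toBlocks_fromBlocks₁₁, toBlocks_fromBlocks₁₂]
    have h := hLyap
    simp only [transpose_add, transpose_mul, transpose_transpose, hZsym,
      add_mul, mul_add, Matrix.mul_assoc] at h ⊢
    abel_nf at h ⊢
    exact h
  · -- trace identity
    show (((Q + Kᵀ * R * K)) * (fromRows 1 L * Z₁₁ * (fromRows 1 L)ᵀ).toBlocks₁₁).trace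
        - γ ^ 2 * ((fromRows 1 L * Z₁₁ * (fromRows 1 L)ᵀ).toBlocks₂₂).trace
        = x0 ⬝ᵥ Ps *ᵥ x0
    rw [hZs]
    simp only [toBlocks_fromBlocks₁₁, toBlocks_fromBlocks₂₂]
    set Acl : Matrix (Fin n) (Fin n) ℝ := A + B * K + Bw * L with hAcl
    have hKRK : Kᵀ * R * K = Ps * B * R⁻¹ * Bᵀ * Ps := by
      rw [hKt, hK]
      simp only [Matrix.neg_mul, Matrix.mul_neg, neg_neg, Matrix.mul_assoc,
        Matrix.nonsing_inv_mul_cancel_left _ _ hdet]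
    have hLL : (γ ^ 2) • (Lᵀ * L) = (γ ^ 2)⁻¹ • (Ps * Bw * Bwᵀ * Ps) := by
      rw [hLt, hL, Matrix.smul_mul, Matrix.mul_smul, smul_smul, smul_smul]
      rw [show γ ^ 2 * (γ ^ 2)⁻¹ * (γ ^ 2)⁻¹ = (γ ^ 2)⁻¹ by field_simp]
      simp only [Matrix.mul_assoc]
    have hkey : Ps * Acl + Aclᵀ * Ps
        = -(Q + Kᵀ * R * K) + (γ ^ 2) • (Lᵀ * L) := by
      have hexp : (Ps * Acl + Aclᵀ * Ps)
          - (-(Q + Kᵀ * R * K) + (γ ^ 2) • (Lᵀ * L))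
          = Aᵀ * Ps + Ps * A + Q - Ps * B * R⁻¹ * Bᵀ * Ps
            + (γ ^ 2)⁻¹ • (Ps * Bw * Bwᵀ * Ps) := by
        have hPsBK : Ps * (B * K) = -(Ps * B * R⁻¹ * Bᵀ * Ps) := by
          rw [hK]; simp only [Matrix.mul_neg, Matrix.mul_assoc]
        have hKBPs : (B * K)ᵀ * Ps = -(Ps * B * R⁻¹ * Bᵀ * Ps) := by
          rw [transpose_mul, hKt]; simp only [Matrix.neg_mul, Matrix.mul_assoc]
        have hPsBwL : Ps * (Bw * L) = (γ ^ 2)⁻¹ • (Ps * Bw * Bwᵀ * Ps) := by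
          rw [hL, Matrix.mul_smul, Matrix.mul_smul]
          try simp only [Matrix.mul_assoc]
        have hLBwPs : (Bw * L)ᵀ * Ps = (γ ^ 2)⁻¹ • (Ps * Bw * Bwᵀ * Ps) := by
          rw [transpose_mul, hLt, Matrix.smul_mul, Matrix.smul_mul]
          try simp only [transpose_transpose, Matrix.mul_assoc]
        rw [hAcl, hKRK, hLL]
        simp only [transpose_add, mul_add, add_mul, hPsBK, hKBPs, hPsBwL, hLBwPs]
        try abel
      have h0 : (Ps * Acl + Aclᵀ * Ps)
          - (-(Q + Kᵀ * R * K) + (γ ^ 2) • (Lᵀ * L)) = 0 := by rw [hexp, hARE]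
      exact sub_eq_zero.mp h0
    -- take trace of Ps * (Lyapunov equation)
    have h0 : (Ps * (vecMulVec x0 x0 + Acl * Z₁₁ + Z₁₁ * Aclᵀ)).trace = 0 := by
      have h := hLyap
      rw [h, Matrix.mul_zero, trace_zero]
    have t1 : (Ps * vecMulVec x0 x0).trace = x0 ⬝ᵥ Ps *ᵥ x0 := by
      simp only [trace, diag_apply, mul_apply, vecMulVec_apply, dotProduct, mulVec,
        Finset.mul_sum]
      exact Finset.sum_congr rfl fun i _ => Finset.sum_congr rfl fun j _ => by ring
    have t2 : (Ps * (Z₁₁ * Aclᵀ)).trace = (Aclᵀ * Ps * Z₁₁).trace := by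
      rw [← Matrix.mul_assoc, trace_mul_comm, ← Matrix.mul_assoc]
    have t3 : (Ps * (Acl * Z₁₁)).trace = (Ps * Acl * Z₁₁).trace := by
      rw [Matrix.mul_assoc]
    have t4 : (Lᵀ * L * Z₁₁).trace = (L * Z₁₁ * Lᵀ).trace := by
      rw [Matrix.mul_assoc, trace_mul_comm]
    rw [Matrix.mul_add, Matrix.mul_add, trace_add, trace_add, t1, t2, t3] at h0
    rw [add_assoc, ← trace_add, ← Matrix.add_mul, hkey, Matrix.add_mul, trace_add,
      Matrix.neg_mul, trace_neg, Matrix.smul_mul, trace_smul, t4] at h0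
    simp only [smul_eq_mul] at h0
    linarith
end

section
/- Weak duality for the LQR SDP pair: let A be n×n, B be n×m, Q symmetric n×n, R symmetric m×m, and x_0 ∈ ℝⁿ. Suppose Z is a symmetric positive semidefinite (n+m)×(n+m) matrix with blocks Z₁₁ (n×n), Z₁₂ (n×m), Z₂₂ (m×m) satisfying x_0x_0ᵀ + AZ₁₁ + BZ₁₂ᵀ + Z₁₁Aᵀ + Z₁₂Bᵀ = 0, and P is a symmetric n×n matrix such that the block matrix [AᵀP + PA + Q, PB; BᵀP, R] is positive semidefinite. Then Tr(Q Z₁₁) + Tr(R Z₂₂) ≥ x_0ᵀP x_0. -/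
/-!
Pairing the dual LMI matrix `M(P)` with `Z` gives the Lagrangian identity
`Tr(M(P) Z) = Tr(Q Z₁₁) + Tr(R Z₂₂) + Tr(P L(Z))`, where `L(Z) = AZ₁₁ + BZ₁₂ᵀ + Z₁₁Aᵀ + Z₁₂Bᵀ` is the
primal constraint operator. Primal feasibility says `L(Z) = -x₀x₀ᵀ`, so the right-hand side is the
primal cost minus `x₀ᵀPx₀`, while the left-hand side is nonnegative since the trace of a product of
two positive semidefinite matrices is nonnegative.
-/

open Matrix

namespace Matrix

open scoped ComplexOrder MatrixOrder in
theorem PosSemidef.trace_mul_nonneg {ι 𝕜 : Type*} [Fintype ι] [RCLike 𝕜]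
    {M N : Matrix ι ι 𝕜} (hM : M.PosSemidef) (hN : N.PosSemidef) : 0 ≤ (M * N).trace := by
  classical
  obtain ⟨C, rfl⟩ := CStarAlgebra.nonneg_iff_eq_star_mul_self.mp hN.nonneg
  rw [← Matrix.mul_assoc, trace_mul_cycle]
  exact (hM.mul_mul_conjTranspose_same C).trace_nonneg

theorem trace_fromBlocks {ι κ α : Type*} [Fintype ι] [Fintype κ] [AddCommMonoid α]
    (A : Matrix ι ι α) (B : Matrix ι κ α) (C : Matrix κ ι α) (D : Matrix κ κ α) :
    (fromBlocks A B C D).trace = A.trace + D.trace := by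
  simp only [trace, Fintype.sum_sum_type, fromBlocks_apply₁₁, fromBlocks_apply₂₂, diag_apply]

end Matrix

theorem trace_lqrLMI_mul_eq_cost_add_constraint {ι κ α : Type*} [Fintype ι] [Fintype κ]
    [CommSemiring α] (A P Q Z₁₁ : Matrix ι ι α) (B Z₁₂ : Matrix ι κ α) (R Z₂₂ : Matrix κ κ α) :
    (fromBlocks (Aᵀ * P + P * A + Q) (P * B) (Bᵀ * P) R * fromBlocks Z₁₁ Z₁₂ Z₁₂ᵀ Z₂₂).trace =
      (Q * Z₁₁).trace + (R * Z₂₂).trace +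
        (P * (A * Z₁₁ + B * Z₁₂ᵀ + Z₁₁ * Aᵀ + Z₁₂ * Bᵀ)).trace := by
  simp only [fromBlocks_multiply, trace_fromBlocks, Matrix.add_mul, Matrix.mul_add, trace_add,
    ← Matrix.mul_assoc]
  rw [← trace_mul_cycle P Z₁₁ Aᵀ, ← trace_mul_cycle P Z₁₂ Bᵀ]
  ring

theorem lqr_weak_duality_general {n m : ℕ}
    (A : Matrix (Fin n) (Fin n) ℝ) (B : Matrix (Fin n) (Fin m) ℝ)
    (Q : Matrix (Fin n) (Fin n) ℝ)
    (R : Matrix (Fin m) (Fin m) ℝ)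
    (x0 : Fin n → ℝ)
    (Z₁₁ : Matrix (Fin n) (Fin n) ℝ) (Z₁₂ : Matrix (Fin n) (Fin m) ℝ)
    (Z₂₂ : Matrix (Fin m) (Fin m) ℝ)
    (hZ : (fromBlocks Z₁₁ Z₁₂ Z₁₂ᵀ Z₂₂).PosSemidef)
    (hZfeas : vecMulVec x0 x0 + A * Z₁₁ + B * Z₁₂ᵀ + Z₁₁ * Aᵀ + Z₁₂ * Bᵀ = 0)
    (P : Matrix (Fin n) (Fin n) ℝ)
    (hPfeas : (fromBlocks (Aᵀ * P + P * A + Q) (P * B) (Bᵀ * P) R).PosSemidef) :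
    x0 ⬝ᵥ P *ᵥ x0 ≤ (Q * Z₁₁).trace + (R * Z₂₂).trace := by
  have hconstraint : A * Z₁₁ + B * Z₁₂ᵀ + Z₁₁ * Aᵀ + Z₁₂ * Bᵀ = -vecMulVec x0 x0 := by
    rw [eq_neg_iff_add_eq_zero, ← hZfeas]
    abel
  have hgap := hPfeas.trace_mul_nonneg hZ
  rw [trace_lqrLMI_mul_eq_cost_add_constraint, hconstraint, Matrix.mul_neg, trace_neg,
    mul_vecMulVec, trace_vecMulVec, dotProduct_comm] at hgap
  linarith

/-- Weak duality for the LQR SDP pair. -/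
theorem lqr_weak_duality {n m : ℕ}
    (A : Matrix (Fin n) (Fin n) ℝ) (B : Matrix (Fin n) (Fin m) ℝ)
    (Q : Matrix (Fin n) (Fin n) ℝ) (hQ : Q.IsSymm)
    (R : Matrix (Fin m) (Fin m) ℝ) (hRsymm : R.IsSymm)
    (x0 : Fin n → ℝ)
    (Z₁₁ : Matrix (Fin n) (Fin n) ℝ) (Z₁₂ : Matrix (Fin n) (Fin m) ℝ)
    (Z₂₂ : Matrix (Fin m) (Fin m) ℝ)
    (hZ : (fromBlocks Z₁₁ Z₁₂ Z₁₂ᵀ Z₂₂).PosSemidef)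
    (hZfeas : vecMulVec x0 x0 + A * Z₁₁ + B * Z₁₂ᵀ + Z₁₁ * Aᵀ + Z₁₂ * Bᵀ = 0)
    (P : Matrix (Fin n) (Fin n) ℝ) (hP : P.IsSymm)
    (hPfeas : (fromBlocks (Aᵀ * P + P * A + Q) (P * B) (Bᵀ * P) R).PosSemidef) :
    x0 ⬝ᵥ P *ᵥ x0 ≤ (Q * Z₁₁).trace + (R * Z₂₂).trace :=
  lqr_weak_duality_general A B Q R x0 Z₁₁ Z₁₂ Z₂₂ hZ hZfeas P hPfeas
end

section
/- Gramian matrices of stable LTI trajectories satisfy the Lyapunov linear constraint (the inclusion 𝒱 ⊆ 𝒱^sdp): let A be a real n×n matrix, B an n×m matrix, x_0 ∈ ℝⁿ. Let x : [0,∞) → ℝⁿ be differentiable with x'(t) = A x(t) + B u(t) for all t ≥ 0, x(0) = x_0, and x(t) → 0 as t → ∞, where u : [0,∞) → ℝ^m is measurable. Assume the matrix-valued functions t ↦ x(t)x(t)ᵀ and t ↦ x(t)u(t)ᵀ are (entrywise) integrable on (0,∞). Then the matrices Z₁₁ = ∫₀^∞ x(t)x(t)ᵀ dt and Z₁₂ =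 ∫₀^∞ x(t)u(t)ᵀ dt satisfy x_0x_0ᵀ + AZ₁₁ + BZ₁₂ᵀ + Z₁₁Aᵀ + Z₁₂Bᵀ = 0. -/
open Matrix MeasureTheory Filter

/-- Gramian matrices of stable LTI trajectories satisfy the Lyapunov linear
constraint (the inclusion 𝒱 ⊆ 𝒱^sdp). -/
theorem gramian_satisfies_lyapunov_constraint {n m : ℕ}
    (A : Matrix (Fin n) (Fin n) ℝ) (B : Matrix (Fin n) (Fin m) ℝ)
    (x0 : Fin n → ℝ)
    (x : ℝ → Fin n → ℝ) (u : ℝ → Fin m → ℝ)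
    (hu : Measurable u)
    (hderiv : ∀ t : ℝ, 0 ≤ t → HasDerivAt x (A *ᵥ x t + B *ᵥ u t) t)
    (hx0 : x 0 = x0)
    (hlim : Tendsto x atTop (nhds 0))
    (hint_xx : ∀ i j : Fin n,
      IntegrableOn (fun t => x t i * x t j) (Set.Ioi (0 : ℝ)))
    (hint_xu : ∀ (i : Fin n) (j : Fin m),
      IntegrableOn (fun t => x t i * u t j) (Set.Ioi (0 : ℝ))) :
    (let Z₁₁ : Matrix (Fin n) (Fin n) ℝ :=
       Matrix.of fun i j => ∫ t in Set.Ioi (0 : ℝ), x t i * x t j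
     let Z₁₂ : Matrix (Fin n) (Fin m) ℝ :=
       Matrix.of fun i j => ∫ t in Set.Ioi (0 : ℝ), x t i * u t j
     vecMulVec x0 x0 + A * Z₁₁ + B * Z₁₂ᵀ + Z₁₁ * Aᵀ + Z₁₂ * Bᵀ = 0) := by
  intro Z₁₁ Z₁₂
  ext i j
  -- component derivatives
  have hd : ∀ (k : Fin n) (t : ℝ), 0 ≤ t →
      HasDerivAt (fun s => x s k) ((A *ᵥ x t + B *ᵥ u t) k) t := fun k t ht =>
    (hasDerivAt_pi.mp (hderiv t ht)) k
  -- integrability of pieces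
  have hIAx : ∀ i' j' : Fin n,
      IntegrableOn (fun t => (A *ᵥ x t) i' * x t j') (Set.Ioi 0) := by
    intro i' j'
    have h : (fun t => (A *ᵥ x t) i' * x t j')
        = fun t => ∑ k, A i' k * (x t k * x t j') := by
      funext t
      simp [Matrix.mulVec, dotProduct, Finset.sum_mul, mul_assoc]
    rw [h]
    exact integrable_finset_sum _ fun k _ => ((hint_xx k j').const_mul _)
  have hIBu : ∀ (i' : Fin n) (j' : Fin n),
      IntegrableOn (fun t => (B *ᵥ u t) i' * x t j') (Set.Ioi 0) := by
    intro i' j'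
    have h : (fun t => (B *ᵥ u t) i' * x t j')
        = fun t => ∑ k, B i' k * (x t j' * u t k) := by
      funext t
      simp [Matrix.mulVec, dotProduct, Finset.sum_mul]
      ring_nf
      exact Finset.sum_congr rfl fun k _ => by ring
    rw [h]
    exact integrable_finset_sum _ fun k _ => ((hint_xu j' k).const_mul _)
  have hIxA : ∀ (i' : Fin n) (j' : Fin n),
      IntegrableOn (fun t => x t i' * (A *ᵥ x t) j') (Set.Ioi 0) := by
    intro i' j'
    have h : (fun t => x t i' * (A *ᵥ x t) j')
        = fun t => ∑ k, A j' k * (x t i' * x t k) := by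
      funext t
      simp [Matrix.mulVec, dotProduct, Finset.mul_sum]
      exact Finset.sum_congr rfl fun k _ => by ring
    rw [h]
    exact integrable_finset_sum _ fun k _ => ((hint_xx i' k).const_mul _)
  have hIxB : ∀ (i' : Fin n) (j' : Fin n),
      IntegrableOn (fun t => x t i' * (B *ᵥ u t) j') (Set.Ioi 0) := by
    intro i' j'
    have h : (fun t => x t i' * (B *ᵥ u t) j')
        = fun t => ∑ k, B j' k * (x t i' * u t k) := by
      funext t
      simp [Matrix.mulVec, dotProduct, Finset.mul_sum]
      exact Finset.sum_congr rfl fun k _ => by ring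
    rw [h]
    exact integrable_finset_sum _ fun k _ => ((hint_xu i' k).const_mul _)
  -- the derivative of g t = x t i * x t j
  set f' : ℝ → ℝ := fun t =>
    (A *ᵥ x t + B *ᵥ u t) i * x t j + x t i * (A *ᵥ x t + B *ᵥ u t) j with hf'
  have hdg : ∀ t ∈ Set.Ioi (0:ℝ), HasDerivAt (fun s => x s i * x s j) (f' t) t := by
    intro t ht
    exact (hd i t (le_of_lt ht)).mul (hd j t (le_of_lt ht))
  have hf'int : IntegrableOn f' (Set.Ioi 0) := by
    have h : f' = fun t => ((A *ᵥ x t) i * x t j + (B *ᵥ u t) i * x t j)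
        + (x t i * (A *ᵥ x t) j + x t i * (B *ᵥ u t) j) := by
      funext t; simp [hf']; ring
    rw [h]
    exact (((hIAx i j).add (hIBu i j)).add ((hIxA i j).add (hIxB i j)))
  have hcont : ContinuousWithinAt (fun s => x s i * x s j) (Set.Ici (0:ℝ)) 0 :=
    (((hd i 0 le_rfl).mul (hd j 0 le_rfl)).continuousAt).continuousWithinAt
  have hlimk : ∀ k : Fin n, Tendsto (fun t => x t k) atTop (nhds 0) := by
    intro k
    have := tendsto_pi_nhds.mp hlim k
    simpa using this
  have hlimg : Tendsto (fun t => x t i * x t j) atTop (nhds 0) := by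
    have := (hlimk i).mul (hlimk j)
    simpa using this
  have hFTC : ∫ t in Set.Ioi (0:ℝ), f' t = -(x0 i * x0 j) := by
    rw [MeasureTheory.integral_Ioi_of_hasDerivAt_of_tendsto hcont hdg hf'int hlimg]
    rw [hx0]; ring
  -- split the integral
  have hsplit : ∫ t in Set.Ioi (0:ℝ), f' t
      = (∫ t in Set.Ioi (0:ℝ), (A *ᵥ x t) i * x t j)
      + (∫ t in Set.Ioi (0:ℝ), (B *ᵥ u t) i * x t j)
      + (∫ t in Set.Ioi (0:ℝ), x t i * (A *ᵥ x t) j)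
      + (∫ t in Set.Ioi (0:ℝ), x t i * (B *ᵥ u t) j) := by
    have h : f' = fun t => (((A *ᵥ x t) i * x t j + (B *ᵥ u t) i * x t j)
        + x t i * (A *ᵥ x t) j) + x t i * (B *ᵥ u t) j := by
      funext t; simp [hf']; ring
    have hA := integral_add (hIAx i j) (hIBu i j)
    have hB := integral_add ((hIAx i j).add (hIBu i j)) (hIxA i j)
    have hC := integral_add (((hIAx i j).add (hIBu i j)).add (hIxA i j)) (hIxB i j)
    simp only [Pi.add_apply] at hB hC
    rw [h]
    simp only [hC, hB, hA]
  -- evaluate each integral as a sum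
  have eAx : ∫ t in Set.Ioi (0:ℝ), (A *ᵥ x t) i * x t j
      = ∑ k, A i k * ∫ t in Set.Ioi (0:ℝ), x t k * x t j := by
    have h : (fun t => (A *ᵥ x t) i * x t j)
        = fun t => ∑ k, A i k * (x t k * x t j) := by
      funext t
      simp [Matrix.mulVec, dotProduct, Finset.sum_mul, mul_assoc]
    rw [h, integral_finset_sum _ fun k _ => ((hint_xx k j).const_mul _)]
    exact Finset.sum_congr rfl fun k _ => integral_const_mul _ _
  have eBu : ∫ t in Set.Ioi (0:ℝ), (B *ᵥ u t) i * x t j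
      = ∑ k, B i k * ∫ t in Set.Ioi (0:ℝ), x t j * u t k := by
    have h : (fun t => (B *ᵥ u t) i * x t j)
        = fun t => ∑ k, B i k * (x t j * u t k) := by
      funext t
      simp [Matrix.mulVec, dotProduct, Finset.sum_mul]
      exact Finset.sum_congr rfl fun k _ => by ring
    rw [h, integral_finset_sum _ fun k _ => ((hint_xu j k).const_mul _)]
    exact Finset.sum_congr rfl fun k _ => integral_const_mul _ _
  have exA : ∫ t in Set.Ioi (0:ℝ), x t i * (A *ᵥ x t) j
      = ∑ k, A j k * ∫ t in Set.Ioi (0:ℝ), x t i * x t k := by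
    have h : (fun t => x t i * (A *ᵥ x t) j)
        = fun t => ∑ k, A j k * (x t i * x t k) := by
      funext t
      simp [Matrix.mulVec, dotProduct, Finset.mul_sum]
      exact Finset.sum_congr rfl fun k _ => by ring
    rw [h, integral_finset_sum _ fun k _ => ((hint_xx i k).const_mul _)]
    exact Finset.sum_congr rfl fun k _ => integral_const_mul _ _
  have exB : ∫ t in Set.Ioi (0:ℝ), x t i * (B *ᵥ u t) j
      = ∑ k, B j k * ∫ t in Set.Ioi (0:ℝ), x t i * u t k := by
    have h : (fun t => x t i * (B *ᵥ u t) j)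
        = fun t => ∑ k, B j k * (x t i * u t k) := by
      funext t
      simp [Matrix.mulVec, dotProduct, Finset.mul_sum]
      exact Finset.sum_congr rfl fun k _ => by ring
    rw [h, integral_finset_sum _ fun k _ => ((hint_xu i k).const_mul _)]
    exact Finset.sum_congr rfl fun k _ => integral_const_mul _ _
  have key : (∑ k, A i k * ∫ t in Set.Ioi (0:ℝ), x t k * x t j)
      + (∑ k, B i k * ∫ t in Set.Ioi (0:ℝ), x t j * u t k)
      + (∑ k, A j k * ∫ t in Set.Ioi (0:ℝ), x t i * x t k)
      + (∑ k, B j k * ∫ t in Set.Ioi (0:ℝ), x t i * u t k)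
      = -(x0 i * x0 j) := by
    rw [← eAx, ← eBu, ← exA, ← exB, ← hsplit, hFTC]
  simp only [Z₁₁, Z₁₂, Matrix.add_apply, Matrix.mul_apply, Matrix.vecMulVec_apply,
    Matrix.transpose_apply, Matrix.of_apply, Matrix.zero_apply]
  have h1 : ∑ k, (∫ t in Set.Ioi (0:ℝ), x t i * x t k) * A j k
      = ∑ k, A j k * ∫ t in Set.Ioi (0:ℝ), x t i * x t k :=
    Finset.sum_congr rfl fun k _ => mul_comm _ _
  have h2 : ∑ k, (∫ t in Set.Ioi (0:ℝ), x t i * u t k) * B j k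
      = ∑ k, B j k * ∫ t in Set.Ioi (0:ℝ), x t i * u t k :=
    Finset.sum_congr rfl fun k _ => mul_comm _ _
  rw [h1, h2]
  linarith [key]
end

section
/- Completion-of-squares identity for the infinite-horizon LQ game cost: let A, B, B_w, Q, R, γ be as in the game Riccati setup with R positive definite, γ > 0, and let P* be a symmetric n×n matrix with 𝓡(P*) = 0. Let x : [0,∞) → ℝⁿ be differentiable with x'(t) = A x(t) + B u(t) + B_w w(t) for all t ≥ 0, x(0) = x_0, and x(t) → 0 as t → ∞, where u : [0,∞) → ℝ^m and w : [0,∞) → ℝ^p are measurable with t ↦ ‖x(t)‖², t ↦ ‖u(t)‖², t ↦ ‖w(t)‖² integrable on (0,∞). Then ∫₀^∞ ( x(t)ᵀQx(t) + u(t)ᵀRu(t) − γ²‖w(t)‖² ) dt = x_0ᵀP*x_0 + ∫₀^∞ (u(t) + R⁻¹BᵀP*x(t))ᵀ R (u(t) + R⁻¹BᵀP*x(t)) dt − γ² ∫₀^∞ ‖w(t) − γ⁻²B_wᵀP*x(t)‖² dt, and all three integrals are finite. -/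
/-!
Along a trajectory, `d/dt (xᵀ P x) = ẋᵀ P x + xᵀ P ẋ`. Adding this derivative to the running cost
and using `𝓡(P) = 0`, the integrand becomes, pointwise, the difference of the two completed
squares. Integrating over `(0, ∞)`, the derivative contributes `-x₀ᵀ P x₀` because `x(t) → 0`.
Every integrand is a bilinear expression in `x`, `u`, `w` and `ẋ`, which are all in `L²`, hence
integrable.
-/

open Matrix MeasureTheory Filter

theorem Matrix.mulVec_dotProduct {α ι κ : Type*} [CommSemiring α] [Fintype ι] [Fintype κ]
    (M : Matrix κ ι α) (a : ι → α) (b : κ → α) :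
    (M *ᵥ a) ⬝ᵥ b = a ⬝ᵥ Mᵀ *ᵥ b := by
  rw [dotProduct_comm, dotProduct_transpose_mulVec]

section CompletionOfSquares

variable {𝕜 ι κ ν : Type*} [Field 𝕜] [Fintype ι] [Fintype κ] [Fintype ν]

theorem Matrix.dotProduct_add_inv_mul_mulVec_sq [DecidableEq κ] (R : Matrix κ κ 𝕜)
    (hR : IsUnit R.det) (hRs : R.IsSymm) (G : Matrix κ ι 𝕜) (u : κ → 𝕜) (y : ι → 𝕜) :
    (u + (R⁻¹ * G) *ᵥ y) ⬝ᵥ R *ᵥ (u + (R⁻¹ * G) *ᵥ y)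
      = u ⬝ᵥ R *ᵥ u + 2 * (u ⬝ᵥ G *ᵥ y) + y ⬝ᵥ (Gᵀ * R⁻¹ * G) *ᵥ y := by
  have hKt : (R⁻¹ * G)ᵀ = Gᵀ * R⁻¹ := by rw [transpose_mul, transpose_nonsing_inv, hRs.eq]
  simp only [mulVec_add, add_dotProduct, dotProduct_add, Matrix.mulVec_dotProduct, mulVec_mulVec,
    hKt, Matrix.mul_assoc, mul_nonsing_inv_cancel_left R G hR, nonsing_inv_mul R hR,
    Matrix.mul_one, dotProduct_transpose_mulVec]
  ring

theorem mul_dotProduct_sub_inv_smul_sq (a : 𝕜) (ha : a ≠ 0) (w v : κ → 𝕜) :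
    a * ((w - a⁻¹ • v) ⬝ᵥ (w - a⁻¹ • v)) = a * (w ⬝ᵥ w) - 2 * (w ⬝ᵥ v) + a⁻¹ * (v ⬝ᵥ v) := by
  simp only [sub_dotProduct, dotProduct_sub, smul_dotProduct, dotProduct_smul, smul_eq_mul,
    dotProduct_comm v w]
  field_simp
  ring

variable [DecidableEq κ]

noncomputable def gameRiccati (A : Matrix ι ι 𝕜) (B : Matrix ι κ 𝕜) (Bw : Matrix ι ν 𝕜)
    (Q : Matrix ι ι 𝕜) (R : Matrix κ κ 𝕜) (γ : 𝕜) (P : Matrix ι ι 𝕜) : Matrix ι ι 𝕜 :=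
  Aᵀ * P + P * A + Q - P * B * R⁻¹ * Bᵀ * P + (γ ^ 2)⁻¹ • (P * Bw * Bwᵀ * P)

theorem gameRiccati_completion_of_squares (A : Matrix ι ι 𝕜) (B : Matrix ι κ 𝕜)
    (Bw : Matrix ι ν 𝕜) (Q : Matrix ι ι 𝕜) (R : Matrix κ κ 𝕜) (hR : IsUnit R.det)
    (hRs : R.IsSymm) (γ : 𝕜) (hγ : γ ≠ 0) (P : Matrix ι ι 𝕜) (hP : P.IsSymm)
    (hRic : gameRiccati A B Bw Q R γ P = 0) (x : ι → 𝕜) (u : κ → 𝕜) (w : ν → 𝕜) :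
    x ⬝ᵥ Q *ᵥ x + u ⬝ᵥ R *ᵥ u - γ ^ 2 * (w ⬝ᵥ w)
      = -((A *ᵥ x + B *ᵥ u + Bw *ᵥ w) ⬝ᵥ P *ᵥ x + x ⬝ᵥ P *ᵥ (A *ᵥ x + B *ᵥ u + Bw *ᵥ w))
        + (u + (R⁻¹ * Bᵀ * P) *ᵥ x) ⬝ᵥ R *ᵥ (u + (R⁻¹ * Bᵀ * P) *ᵥ x)
        - γ ^ 2 * ((w - (γ ^ 2)⁻¹ • ((Bwᵀ * P) *ᵥ x)) ⬝ᵥ (w - (γ ^ 2)⁻¹ • ((Bwᵀ * P) *ᵥ x))) := by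
  have hB : x ⬝ᵥ (P * B) *ᵥ u = u ⬝ᵥ (Bᵀ * P) *ᵥ x := by
    rw [← dotProduct_transpose_mulVec, transpose_mul, hP.eq]
  have hBw : x ⬝ᵥ (P * Bw) *ᵥ w = w ⬝ᵥ (Bwᵀ * P) *ᵥ x := by
    rw [← dotProduct_transpose_mulVec, transpose_mul, hP.eq]
  have hzero : x ⬝ᵥ gameRiccati A B Bw Q R γ P *ᵥ x = 0 := by simp [hRic]
  rw [Matrix.mul_assoc, dotProduct_add_inv_mul_mulVec_sq R hR hRs,
    mul_dotProduct_sub_inv_smul_sq _ (pow_ne_zero 2 hγ)]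
  simp only [gameRiccati, add_mulVec, sub_mulVec, smul_mulVec, mulVec_add, add_dotProduct,
    dotProduct_add, dotProduct_sub, dotProduct_smul, smul_eq_mul, Matrix.mulVec_dotProduct,
    mulVec_mulVec, transpose_mul, transpose_transpose, hP.eq, Matrix.mul_assoc] at hzero ⊢
  linear_combination hzero + hB + hBw

end CompletionOfSquares

section SquareIntegrable

variable {α ι κ : Type*} [MeasurableSpace α] {μ : Measure α} [Fintype ι] [Fintype κ]

theorem memLp_two_of_integrable_dotProduct_self {f : α → ι → ℝ} (hf : AEStronglyMeasurable f μ)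
    (h : Integrable (fun a => f a ⬝ᵥ f a) μ) : MemLp f 2 μ := by
  refine MemLp.of_eval fun i => ?_
  have hfi : AEStronglyMeasurable (fun a => f a i) μ :=
    (continuous_apply i).comp_aestronglyMeasurable hf
  refine (memLp_two_iff_integrable_sq hfi).2 (h.mono' (hfi.pow 2) (.of_forall fun a => ?_))
  rw [Real.norm_eq_abs, abs_of_nonneg (sq_nonneg _), sq]
  exact Finset.single_le_sum (f := fun j => f a j * f a j) (fun j _ => mul_self_nonneg _)
    (Finset.mem_univ i)

variable {𝕜 : Type*} [NormedRing 𝕜] {p : ENNReal}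

theorem MeasureTheory.MemLp.mulVec (M : Matrix κ ι 𝕜) {f : α → ι → 𝕜} (hf : MemLp f p μ) :
    MemLp (fun a => M *ᵥ f a) p μ :=
  MemLp.of_eval fun i => memLp_finsetSum _ fun j _ => (hf.eval j).const_mul (M i j)

theorem MeasureTheory.MemLp.integrable_dotProduct {f g : α → ι → 𝕜} (hf : MemLp f 2 μ)
    (hg : MemLp g 2 μ) : Integrable (fun a => f a ⬝ᵥ g a) μ :=
  integrable_finsetSum _ fun i _ => (hf.eval i).integrable_mul (hg.eval i)

end SquareIntegrable

section Derivatives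

variable {𝕜 ι κ : Type*} [NontriviallyNormedField 𝕜] [Fintype ι]
  {f g : 𝕜 → ι → 𝕜} {f' g' : ι → 𝕜} {t : 𝕜}

theorem HasDerivAt.dotProduct (hf : HasDerivAt f f' t) (hg : HasDerivAt g g' t) :
    HasDerivAt (fun s => f s ⬝ᵥ g s) (f' ⬝ᵥ g t + f t ⬝ᵥ g') t := by
  have h := HasDerivAt.fun_sum fun i (_ : i ∈ Finset.univ) =>
    (hasDerivAt_pi.1 hf i).fun_mul (hasDerivAt_pi.1 hg i)
  rw [Finset.sum_add_distrib] at h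
  exact h

theorem HasDerivAt.mulVec (M : Matrix κ ι 𝕜) (hf : HasDerivAt f f' t) :
    HasDerivAt (fun s => M *ᵥ f s) (M *ᵥ f') t :=
  hasDerivAt_pi.2 fun i => HasDerivAt.fun_sum fun j _ => (hasDerivAt_pi.1 hf j).const_mul (M i j)

end Derivatives

theorem integral_Ioi_deriv_dotProduct_mulVec_self {ι : Type*} [Fintype ι] (P : Matrix ι ι ℝ)
    {x x' : ℝ → ι → ℝ} {a : ℝ} (hx : ∀ t, a ≤ t → HasDerivAt x (x' t) t)
    (hlim : Tendsto x atTop (nhds 0))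
    (hint : IntegrableOn (fun t => x' t ⬝ᵥ P *ᵥ x t + x t ⬝ᵥ P *ᵥ x' t) (Set.Ioi a)) :
    ∫ t in Set.Ioi a, (x' t ⬝ᵥ P *ᵥ x t + x t ⬝ᵥ P *ᵥ x' t) = -(x a ⬝ᵥ P *ᵥ x a) := by
  have hV : ∀ t, a ≤ t → HasDerivAt (fun s => x s ⬝ᵥ P *ᵥ x s)
      (x' t ⬝ᵥ P *ᵥ x t + x t ⬝ᵥ P *ᵥ x' t) t :=
    fun t ht => (hx t ht).dotProduct ((hx t ht).mulVec P)
  have hVlim : Tendsto (fun s => x s ⬝ᵥ P *ᵥ x s) atTop (nhds 0) := by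
    simpa [Function.comp_def] using
      ((continuous_id.dotProduct (continuous_const.matrix_mulVec continuous_id)).tendsto 0).comp hlim
  rw [integral_Ioi_of_hasDerivAt_of_tendsto (hV a le_rfl).continuousAt.continuousWithinAt
    (fun t ht => hV t ht.le) hint hVlim, zero_sub]

theorem lq_game_completion_of_squares_general {n m p : ℕ}
    (A : Matrix (Fin n) (Fin n) ℝ) (B : Matrix (Fin n) (Fin m) ℝ)
    (Bw : Matrix (Fin n) (Fin p) ℝ)
    (Q : Matrix (Fin n) (Fin n) ℝ)
    (R : Matrix (Fin m) (Fin m) ℝ) (hR : R.PosDef) (hRsymm : R.IsSymm)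
    (γ : ℝ) (hγ : 0 < γ)
    (Ps : Matrix (Fin n) (Fin n) ℝ) (hPs : Ps.IsSymm)
    (hARE : Aᵀ * Ps + Ps * A + Q - Ps * B * R⁻¹ * Bᵀ * Ps
      + (γ ^ 2)⁻¹ • (Ps * Bw * Bwᵀ * Ps) = 0)
    (x0 : Fin n → ℝ)
    (x : ℝ → Fin n → ℝ) (u : ℝ → Fin m → ℝ) (w : ℝ → Fin p → ℝ)
    (hu : Measurable u) (hw : Measurable w)
    (hderiv : ∀ t : ℝ, 0 ≤ t →
      HasDerivAt x (A *ᵥ x t + B *ᵥ u t + Bw *ᵥ w t) t)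
    (hx0 : x 0 = x0)
    (hlim : Tendsto x atTop (nhds 0))
    (hint_x : IntegrableOn (fun t => x t ⬝ᵥ x t) (Set.Ioi (0 : ℝ)))
    (hint_u : IntegrableOn (fun t => u t ⬝ᵥ u t) (Set.Ioi (0 : ℝ)))
    (hint_w : IntegrableOn (fun t => w t ⬝ᵥ w t) (Set.Ioi (0 : ℝ))) :
    (let uh : ℝ → Fin m → ℝ := fun t => u t + (R⁻¹ * Bᵀ * Ps) *ᵥ x t
     let wh : ℝ → Fin p → ℝ := fun t => w t - (γ ^ 2)⁻¹ • ((Bwᵀ * Ps) *ᵥ x t)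
     IntegrableOn
       (fun t => x t ⬝ᵥ Q *ᵥ x t + u t ⬝ᵥ R *ᵥ u t - γ ^ 2 * (w t ⬝ᵥ w t))
       (Set.Ioi (0 : ℝ)) ∧
     IntegrableOn (fun t => uh t ⬝ᵥ R *ᵥ uh t) (Set.Ioi (0 : ℝ)) ∧
     IntegrableOn (fun t => wh t ⬝ᵥ wh t) (Set.Ioi (0 : ℝ)) ∧
     (∫ t in Set.Ioi (0 : ℝ),
        (x t ⬝ᵥ Q *ᵥ x t + u t ⬝ᵥ R *ᵥ u t - γ ^ 2 * (w t ⬝ᵥ w t)))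
       = x0 ⬝ᵥ Ps *ᵥ x0
         + (∫ t in Set.Ioi (0 : ℝ), uh t ⬝ᵥ R *ᵥ uh t)
         - γ ^ 2 * ∫ t in Set.Ioi (0 : ℝ), wh t ⬝ᵥ wh t) := by
  intro uh wh
  set xdot := fun t => A *ᵥ x t + B *ᵥ u t + Bw *ᵥ w t
  have hxc : ContinuousOn x (Set.Ioi 0) := fun t ht =>
    (hderiv t ht.le).continuousAt.continuousWithinAt
  have hxL := memLp_two_of_integrable_dotProduct_self
    (hxc.aestronglyMeasurable measurableSet_Ioi) hint_x
  have huL := memLp_two_of_integrable_dotProduct_self hu.aestronglyMeasurable hint_u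
  have hwL := memLp_two_of_integrable_dotProduct_self hw.aestronglyMeasurable hint_w
  have hxdotL : MemLp xdot 2 _ := ((hxL.mulVec A).add (huL.mulVec B)).add (hwL.mulVec Bw)
  have huhL : MemLp uh 2 _ := huL.add (hxL.mulVec _)
  have hwhL : MemLp wh 2 _ := hwL.sub ((hxL.mulVec (Bwᵀ * Ps)).const_smul (γ ^ 2)⁻¹)
  have hstorage : IntegrableOn (fun t => xdot t ⬝ᵥ Ps *ᵥ x t + x t ⬝ᵥ Ps *ᵥ xdot t) (Set.Ioi 0) :=
    (hxdotL.integrable_dotProduct (hxL.mulVec Ps)).add (hxL.integrable_dotProduct (hxdotL.mulVec Ps))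
  have hU := huhL.integrable_dotProduct (huhL.mulVec R)
  have hW := hwhL.integrable_dotProduct hwhL
  refine ⟨((hxL.integrable_dotProduct (hxL.mulVec Q)).add
    (huL.integrable_dotProduct (huL.mulVec R))).sub (hint_w.const_mul _), hU, hW, ?_⟩
  have hsquares := gameRiccati_completion_of_squares A B Bw Q R
    ((isUnit_iff_isUnit_det R).1 hR.isUnit) hRsymm γ hγ.ne' Ps hPs hARE
  calc _ = ∫ t in Set.Ioi 0, (-(xdot t ⬝ᵥ Ps *ᵥ x t + x t ⬝ᵥ Ps *ᵥ xdot t)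
          + uh t ⬝ᵥ R *ᵥ uh t - γ ^ 2 * (wh t ⬝ᵥ wh t)) :=
        integral_congr_ae (ae_of_all _ fun t => hsquares (x t) (u t) (w t))
    _ = -(∫ t in Set.Ioi 0, (xdot t ⬝ᵥ Ps *ᵥ x t + x t ⬝ᵥ Ps *ᵥ xdot t))
          + (∫ t in Set.Ioi 0, uh t ⬝ᵥ R *ᵥ uh t) - γ ^ 2 * ∫ t in Set.Ioi 0, wh t ⬝ᵥ wh t := by
        rw [integral_sub, integral_add, integral_neg, integral_const_mul]
        exacts [hstorage.neg, hU, hstorage.neg.add hU, hW.const_mul _]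
    _ = _ := by rw [integral_Ioi_deriv_dotProduct_mulVec_self Ps hderiv hlim hstorage, hx0, neg_neg]

/-- Completion-of-squares identity for the infinite-horizon LQ game cost. -/
theorem lq_game_completion_of_squares {n m p : ℕ}
    (A : Matrix (Fin n) (Fin n) ℝ) (B : Matrix (Fin n) (Fin m) ℝ)
    (Bw : Matrix (Fin n) (Fin p) ℝ)
    (Q : Matrix (Fin n) (Fin n) ℝ) (hQ : Q.IsSymm)
    (R : Matrix (Fin m) (Fin m) ℝ) (hR : R.PosDef) (hRsymm : R.IsSymm)
    (γ : ℝ) (hγ : 0 < γ)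
    (Ps : Matrix (Fin n) (Fin n) ℝ) (hPs : Ps.IsSymm)
    (hARE : Aᵀ * Ps + Ps * A + Q - Ps * B * R⁻¹ * Bᵀ * Ps
      + (γ ^ 2)⁻¹ • (Ps * Bw * Bwᵀ * Ps) = 0)
    (x0 : Fin n → ℝ)
    (x : ℝ → Fin n → ℝ) (u : ℝ → Fin m → ℝ) (w : ℝ → Fin p → ℝ)
    (hu : Measurable u) (hw : Measurable w)
    (hderiv : ∀ t : ℝ, 0 ≤ t →
      HasDerivAt x (A *ᵥ x t + B *ᵥ u t + Bw *ᵥ w t) t)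
    (hx0 : x 0 = x0)
    (hlim : Tendsto x atTop (nhds 0))
    (hint_x : IntegrableOn (fun t => x t ⬝ᵥ x t) (Set.Ioi (0 : ℝ)))
    (hint_u : IntegrableOn (fun t => u t ⬝ᵥ u t) (Set.Ioi (0 : ℝ)))
    (hint_w : IntegrableOn (fun t => w t ⬝ᵥ w t) (Set.Ioi (0 : ℝ))) :
    (let uh : ℝ → Fin m → ℝ := fun t => u t + (R⁻¹ * Bᵀ * Ps) *ᵥ x t
     let wh : ℝ → Fin p → ℝ := fun t => w t - (γ ^ 2)⁻¹ • ((Bwᵀ * Ps) *ᵥ x t)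
     IntegrableOn
       (fun t => x t ⬝ᵥ Q *ᵥ x t + u t ⬝ᵥ R *ᵥ u t - γ ^ 2 * (w t ⬝ᵥ w t))
       (Set.Ioi (0 : ℝ)) ∧
     IntegrableOn (fun t => uh t ⬝ᵥ R *ᵥ uh t) (Set.Ioi (0 : ℝ)) ∧
     IntegrableOn (fun t => wh t ⬝ᵥ wh t) (Set.Ioi (0 : ℝ)) ∧
     (∫ t in Set.Ioi (0 : ℝ),
        (x t ⬝ᵥ Q *ᵥ x t + u t ⬝ᵥ R *ᵥ u t - γ ^ 2 * (w t ⬝ᵥ w t)))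
       = x0 ⬝ᵥ Ps *ᵥ x0
         + (∫ t in Set.Ioi (0 : ℝ), uh t ⬝ᵥ R *ᵥ uh t)
         - γ ^ 2 * ∫ t in Set.Ioi (0 : ℝ), wh t ⬝ᵥ wh t) :=
  lq_game_completion_of_squares_general A B Bw Q R hR hRsymm γ hγ Ps hPs hARE x0 x u w hu hw hderiv
    hx0 hlim hint_x hint_u hint_w
end

section
/- Strict 𝓗∞ performance of the Riccati state-feedback gain (time-domain form of Theorem 2): let A, B, B_w, Q, R, γ be as in the game Riccati setup with R positive definite and γ > 0, let P* be a symmetric n×n matrix with 𝓡(P*) = 0, and set K* = −R⁻¹BᵀP*, Q* = Q + (K*)ᵀRK*. Let w : [0,∞) → ℝ^p be continuous with ∫₀^∞ ‖w(t)‖² dt > 0, and let x : [0,∞) → ℝⁿ be differentiable with x'(t) = (A+BK*) x(t) + B_w w(t) for all t ≥ 0, x(0) = 0, x(t) → 0 as t → ∞, and t ↦ ‖x(t)‖², t ↦ ‖w(t)‖² integrable on (0,∞). Then ∫₀^∞ ( x(t)ᵀQ*x(t) − γ²‖w(t)‖² ) dt < 0. -/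
/-!
Along a trajectory, the storage function `V(x) = xᵀ P* x` satisfies the completion-of-squares
identity `V' + xᵀ Q* x - γ² ‖w‖² = -γ² ‖w - G x‖²` with the worst-case gain
`G = γ⁻² B_wᵀ P*`; this is where the Riccati equation enters. Integrating over `(0, ∞)`, with
`x(0) = 0` and `x → 0`, the performance integral equals `-γ²` times the energy of `w - G x`.
That energy is positive: otherwise `w = G x`, so `x` solves a linear ODE with zero initial state,
hence `x ≡ 0` and then `w ≡ 0`.
-/

open Matrix MeasureTheory Filter Set

section MatrixIdentities

variable {𝕜 : Type*} {n m p : Type*} [Fintype n] [Fintype m] [Fintype p]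

theorem lyapunov_closedLoop_of_riccati [CommRing 𝕜] [DecidableEq m]
    (A P Q S : Matrix n n 𝕜) (B : Matrix n m 𝕜) (R : Matrix m m 𝕜) (hR : IsUnit R.det)
    (hARE : Aᵀ * P + P * A + Q - P * B * R⁻¹ * Bᵀ * P + S = 0) :
    (A + B * -(R⁻¹ * Bᵀ * P))ᵀ * P + P * (A + B * -(R⁻¹ * Bᵀ * P))
      + (Q + (-(R⁻¹ * Bᵀ * P))ᵀ * R * -(R⁻¹ * Bᵀ * P)) + S = 0 := by
  rw [← hARE]
  simp only [transpose_add, transpose_mul, transpose_neg, transpose_transpose, Matrix.mul_add,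
    Matrix.add_mul, Matrix.neg_mul, Matrix.mul_neg, Matrix.mul_assoc, neg_neg,
    mul_nonsing_inv_cancel_left _ _ hR]
  abel

theorem quadForm_complete_square [Field 𝕜] (M P Qs : Matrix n n 𝕜) (Bw : Matrix n p 𝕜)
    {g : 𝕜} (hg : g ≠ 0) (hP : Pᵀ = P)
    (hLyap : Mᵀ * P + P * M + Qs + g⁻¹ • (P * Bw * Bwᵀ * P) = 0)
    {G : Matrix p n 𝕜} (hG : G = g⁻¹ • (Bwᵀ * P)) (a : n → 𝕜) (b : p → 𝕜) :
    a ⬝ᵥ Qs *ᵥ a - g * (b ⬝ᵥ b)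
        + ((M *ᵥ a + Bw *ᵥ b) ⬝ᵥ P *ᵥ a + a ⬝ᵥ P *ᵥ (M *ᵥ a + Bw *ᵥ b))
      = -g * ((b - G *ᵥ a) ⬝ᵥ (b - G *ᵥ a)) := by
  subst hG
  set c := (Bwᵀ * P) *ᵥ a with hc
  have hPsymm (u : n → 𝕜) : a ⬝ᵥ P *ᵥ u = u ⬝ᵥ P *ᵥ a := by
    simpa only [hP] using dotProduct_transpose_mulVec P a u
  have hMP : a ⬝ᵥ (Mᵀ * P) *ᵥ a = (M *ᵥ a) ⬝ᵥ P *ᵥ a := by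
    rw [← mulVec_mulVec, dotProduct_transpose_mulVec, dotProduct_comm]
  have hBwP : (Bw *ᵥ b) ⬝ᵥ P *ᵥ a = b ⬝ᵥ c := by
    rw [hc, ← mulVec_mulVec, dotProduct_transpose_mulVec, dotProduct_comm]
  have hcc : a ⬝ᵥ (P * Bw * Bwᵀ * P) *ᵥ a = c ⬝ᵥ c := by
    have : P * Bw * Bwᵀ * P = (Bwᵀ * P)ᵀ * (Bwᵀ * P) := by
      simp only [transpose_mul, transpose_transpose, hP, Matrix.mul_assoc]
    rw [this, ← mulVec_mulVec, dotProduct_transpose_mulVec]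
  have hquad := congrArg (fun X => a ⬝ᵥ X *ᵥ a) hLyap
  simp only [add_mulVec, smul_mulVec, dotProduct_add, dotProduct_smul, zero_mulVec,
    dotProduct_zero, smul_eq_mul, hMP, hcc] at hquad
  rw [← mulVec_mulVec, hPsymm] at hquad
  rw [smul_mulVec, ← hc]
  simp only [add_dotProduct, hPsymm (M *ᵥ a + Bw *ᵥ b), hBwP, sub_dotProduct,
    dotProduct_sub, smul_dotProduct, dotProduct_smul, smul_eq_mul, dotProduct_comm c b]
  linear_combination hquad + (g⁻¹ * (c ⬝ᵥ c) - 2 * (b ⬝ᵥ c)) * mul_inv_cancel₀ hg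

end MatrixIdentities

section QuadraticForms

variable {ι : Type*} [Fintype ι]

theorem dotProduct_self_nonneg (v : ι → ℝ) : 0 ≤ v ⬝ᵥ v :=
  Finset.sum_nonneg fun i _ => mul_self_nonneg (v i)

theorem dotProduct_self_sub_le (u v : ι → ℝ) :
    (u - v) ⬝ᵥ (u - v) ≤ 2 * (u ⬝ᵥ u) + 2 * (v ⬝ᵥ v) := by
  simp only [dotProduct, Finset.mul_sum, ← Finset.sum_add_distrib, Pi.sub_apply]
  gcongr with i
  nlinarith [sq_nonneg (u i + v i)]

theorem abs_dotProduct_mulVec_le [DecidableEq ι] (M : Matrix ι ι ℝ) (v : ι → ℝ) :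
    |v ⬝ᵥ M *ᵥ v| ≤ ‖toEuclideanCLM (𝕜 := ℝ) M‖ * (v ⬝ᵥ v) := by
  set v₂ := WithLp.toLp 2 v
  have hv : v ⬝ᵥ v = ‖v₂‖ ^ 2 := by
    rw [EuclideanSpace.norm_sq_eq]
    simp [v₂, dotProduct, sq]
  rw [← inner_toEuclideanCLM M v₂ v₂, hv]
  calc _ ≤ ‖v₂‖ * ‖toEuclideanCLM (𝕜 := ℝ) M v₂‖ := abs_real_inner_le_norm _ _
    _ ≤ ‖v₂‖ * (‖toEuclideanCLM (𝕜 := ℝ) M‖ * ‖v₂‖) := by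
      gcongr
      exact ContinuousLinearMap.le_opNorm _ _
    _ = _ := by ring

theorem hasDerivAt_dotProduct_mulVec (P : Matrix ι ι ℝ) {x : ℝ → ι → ℝ} {d : ι → ℝ} {t : ℝ}
    (hx : HasDerivAt x d t) :
    HasDerivAt (fun s => x s ⬝ᵥ P *ᵥ x s) (d ⬝ᵥ P *ᵥ x t + x t ⬝ᵥ P *ᵥ d) t := by
  have hxi (i : ι) : HasDerivAt (fun s => x s i) (d i) t := hasDerivAt_pi.1 hx i
  have : HasDerivAt (fun s => ∑ i, x s i * ∑ j, P i j * x s j)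
      (∑ i, (d i * ∑ j, P i j * x t j + x t i * ∑ j, P i j * d j)) t :=
    .fun_sum fun i _ => (hxi i).mul (.fun_sum fun j _ => (hxi j).const_mul (P i j))
  simpa only [dotProduct, mulVec, Finset.sum_add_distrib] using this

variable {α : Type*} [MeasurableSpace α] {μ : Measure α}

theorem MeasureTheory.Integrable.dotProduct_mulVec [DecidableEq ι] (M : Matrix ι ι ℝ)
    {x : α → ι → ℝ} (hx : AEStronglyMeasurable x μ) (h : Integrable (fun t => x t ⬝ᵥ x t) μ) :
    Integrable (fun t => x t ⬝ᵥ M *ᵥ x t) μ :=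
  (h.const_mul _).mono'
    ((by fun_prop : Continuous fun v : ι → ℝ => v ⬝ᵥ M *ᵥ v).comp_aestronglyMeasurable hx)
    (ae_of_all _ fun t => abs_dotProduct_mulVec_le M (x t))

theorem MeasureTheory.Integrable.dotProduct_self_sub {u v : α → ι → ℝ}
    (hu : AEStronglyMeasurable u μ) (hv : AEStronglyMeasurable v μ)
    (hu2 : Integrable (fun t => u t ⬝ᵥ u t) μ) (hv2 : Integrable (fun t => v t ⬝ᵥ v t) μ) :
    Integrable (fun t => (u t - v t) ⬝ᵥ (u t - v t)) μ := by
  refine ((hu2.const_mul 2).add (hv2.const_mul 2)).mono'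
    ((by fun_prop : Continuous fun v : ι → ℝ => v ⬝ᵥ v).comp_aestronglyMeasurable (hu.sub hv)) ?_
  refine ae_of_all _ fun t => ?_
  rw [Real.norm_eq_abs, abs_of_nonneg (dotProduct_self_nonneg _)]
  exact dotProduct_self_sub_le _ _

end QuadraticForms

theorem linear_ODE_eqOn_zero {E : Type*} [NormedAddCommGroup E] [NormedSpace ℝ E]
    (L : E →L[ℝ] E) {x : ℝ → E} (hx : ∀ t, 0 ≤ t → HasDerivAt x (L (x t)) t) (hx0 : x 0 = 0) :
    EqOn x 0 (Ici 0) := fun t ht =>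
  eq_zero_of_abs_deriv_le_mul_abs_self_of_eq_zero_right (K := ‖L‖)
    (fun s hs => (hx s hs.1).continuousAt.continuousWithinAt)
    (fun s hs => (hx s hs.1).hasDerivWithinAt) hx0 (fun _ _ => L.le_opNorm _) t ⟨ht, le_rfl⟩

section Dissipation

variable {n p : Type*} [Fintype n] [Fintype p] {M : Matrix n n ℝ} {Bw : Matrix n p ℝ}
  {x : ℝ → n → ℝ} {w : ℝ → p → ℝ}

theorem integral_supply_eq_neg_mul_integral_deviation {P Qs : Matrix n n ℝ} {G : Matrix p n ℝ}
    {g : ℝ} (hg : g ≠ 0) (hP : Pᵀ = P)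
    (hLyap : Mᵀ * P + P * M + Qs + g⁻¹ • (P * Bw * Bwᵀ * P) = 0) (hG : G = g⁻¹ • (Bwᵀ * P))
    (hderiv : ∀ t, 0 ≤ t → HasDerivAt x (M *ᵥ x t + Bw *ᵥ w t) t) (hx0 : x 0 = 0)
    (hlim : Tendsto x atTop (nhds 0))
    (hsupply : IntegrableOn (fun t => x t ⬝ᵥ Qs *ᵥ x t - g * (w t ⬝ᵥ w t)) (Ioi 0))
    (hdev : IntegrableOn (fun t => (w t - G *ᵥ x t) ⬝ᵥ (w t - G *ᵥ x t)) (Ioi 0)) :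
    ∫ t in Ioi 0, (x t ⬝ᵥ Qs *ᵥ x t - g * (w t ⬝ᵥ w t))
      = -g * ∫ t in Ioi 0, (w t - G *ᵥ x t) ⬝ᵥ (w t - G *ᵥ x t) := by
  set V := fun t => x t ⬝ᵥ P *ᵥ x t
  have hV (t : ℝ) (ht : 0 ≤ t) : HasDerivAt V
      (-g * ((w t - G *ᵥ x t) ⬝ᵥ (w t - G *ᵥ x t)) - (x t ⬝ᵥ Qs *ᵥ x t - g * (w t ⬝ᵥ w t))) t :=
    (hasDerivAt_dotProduct_mulVec P (hderiv t ht)).congr_deriv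
      (by linarith [quadForm_complete_square M P Qs Bw hg hP hLyap hG (x t) (w t)])
  have hV_lim : Tendsto V atTop (nhds 0) := by
    have hcont : Continuous fun v : n → ℝ => v ⬝ᵥ P *ᵥ v := by fun_prop
    simpa [V, Function.comp_def] using (hcont.tendsto 0).comp hlim
  have hFTC := integral_Ioi_of_hasDerivAt_of_tendsto (hV 0 le_rfl).continuousAt.continuousWithinAt
    (fun t ht => hV t (le_of_lt ht)) ((hdev.const_mul (-g)).sub hsupply) hV_lim
  rw [integral_sub (hdev.const_mul (-g)) hsupply, integral_const_mul] at hFTC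
  simp only [V, hx0, zero_dotProduct, sub_zero] at hFTC
  linarith

theorem integral_deviation_pos {G : Matrix p n ℝ}
    (hderiv : ∀ t, 0 ≤ t → HasDerivAt x (M *ᵥ x t + Bw *ᵥ w t) t) (hx0 : x 0 = 0)
    (hw : Continuous w) (hwnz : 0 < ∫ t in Ioi 0, w t ⬝ᵥ w t)
    (hdev : IntegrableOn (fun t => (w t - G *ᵥ x t) ⬝ᵥ (w t - G *ᵥ x t)) (Ioi 0)) :
    0 < ∫ t in Ioi 0, (w t - G *ᵥ x t) ⬝ᵥ (w t - G *ᵥ x t) := by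
  refine (setIntegral_nonneg measurableSet_Ioi fun t _ => dotProduct_self_nonneg _).lt_of_ne'
    fun hzero => hwnz.ne' ?_
  have hGx : ContinuousOn (fun t => G *ᵥ x t) (Ici 0) := by
    have : ContinuousOn x (Ici 0) := fun t ht => (hderiv t ht).continuousAt.continuousWithinAt
    fun_prop
  have hae : ∀ᵐ t ∂volume.restrict (Ioi 0), w t = G *ᵥ x t := by
    filter_upwards [(setIntegral_eq_zero_iff_of_nonneg_ae
      (ae_of_all _ fun t => dotProduct_self_nonneg _) hdev).1 hzero] with t ht
    exact sub_eq_zero.1 (dotProduct_self_eq_zero.1 ht)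
  have hfeedback : EqOn w (fun t => G *ᵥ x t) (Ici 0) :=
    (Measure.eqOn_open_of_ae_eq hae isOpen_Ioi hw.continuousOn (hGx.mono Ioi_subset_Ici_self))
      |>.of_subset_closure hw.continuousOn hGx Ioi_subset_Ici_self (closure_Ioi (0 : ℝ)).ge
  have hx_zero : EqOn x 0 (Ici 0) :=
    linear_ODE_eqOn_zero (mulVecLin (M + Bw * G)).toContinuousLinearMap
      (fun t ht => by simpa [hfeedback ht, add_mulVec, mulVec_mulVec] using hderiv t ht) hx0
  refine (setIntegral_congr_fun (g := fun _ => 0) measurableSet_Ioi fun t ht => ?_).trans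
    (integral_zero _ _)
  simp [hfeedback (mem_Ici_of_Ioi ht), hx_zero (mem_Ici_of_Ioi ht)]

end Dissipation

theorem hinf_strict_performance_general {n m p : ℕ}
    (A : Matrix (Fin n) (Fin n) ℝ) (B : Matrix (Fin n) (Fin m) ℝ)
    (Bw : Matrix (Fin n) (Fin p) ℝ)
    (Q : Matrix (Fin n) (Fin n) ℝ)
    (R : Matrix (Fin m) (Fin m) ℝ) (hR : R.PosDef)
    (γ : ℝ) (hγ : 0 < γ)
    (Ps : Matrix (Fin n) (Fin n) ℝ) (hPs : Ps.IsSymm)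
    (hARE : Aᵀ * Ps + Ps * A + Q - Ps * B * R⁻¹ * Bᵀ * Ps
      + (γ ^ 2)⁻¹ • (Ps * Bw * Bwᵀ * Ps) = 0)
    (x : ℝ → Fin n → ℝ) (w : ℝ → Fin p → ℝ)
    (hw : Continuous w)
    (hwnz : 0 < ∫ t in Set.Ioi (0 : ℝ), w t ⬝ᵥ w t)
    (hderiv : ∀ t : ℝ, 0 ≤ t →
      HasDerivAt x ((A + B * (-(R⁻¹ * Bᵀ * Ps))) *ᵥ x t + Bw *ᵥ w t) t)
    (hx0 : x 0 = 0)
    (hlim : Tendsto x atTop (nhds 0))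
    (hint_x : IntegrableOn (fun t => x t ⬝ᵥ x t) (Set.Ioi (0 : ℝ)))
    (hint_w : IntegrableOn (fun t => w t ⬝ᵥ w t) (Set.Ioi (0 : ℝ))) :
    (let Ks := -(R⁻¹ * Bᵀ * Ps)
     let Qs := Q + Ksᵀ * R * Ks
     (∫ t in Set.Ioi (0 : ℝ), (x t ⬝ᵥ Qs *ᵥ x t - γ ^ 2 * (w t ⬝ᵥ w t))) < 0) := by
  intro Ks Qs
  have hγ2 : 0 < γ ^ 2 := by positivity
  have hLyap := lyapunov_closedLoop_of_riccati A Ps Q _ B R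
    ((isUnit_iff_isUnit_det R).1 hR.isUnit) hARE
  have hx : AEStronglyMeasurable x (volume.restrict (Ioi 0)) :=
    ContinuousOn.aestronglyMeasurable
      (fun t ht => (hderiv t (le_of_lt ht)).continuousAt.continuousWithinAt) measurableSet_Ioi
  set G := (γ ^ 2)⁻¹ • (Bwᵀ * Ps)
  have hdev : IntegrableOn (fun t => (w t - G *ᵥ x t) ⬝ᵥ (w t - G *ᵥ x t)) (Ioi 0) := by
    refine Integrable.dotProduct_self_sub hw.aestronglyMeasurable (by fun_prop) hint_w ?_
    simpa only [← mulVec_mulVec, dotProduct_transpose_mulVec] using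
      Integrable.dotProduct_mulVec (Gᵀ * G) hx hint_x
  have hsupply := (Integrable.dotProduct_mulVec Qs hx hint_x).sub (hint_w.const_mul (γ ^ 2))
  rw [integral_supply_eq_neg_mul_integral_deviation hγ2.ne' hPs hLyap rfl hderiv hx0 hlim
    hsupply hdev]
  exact mul_neg_of_neg_of_pos (neg_neg_of_pos hγ2)
    (integral_deviation_pos hderiv hx0 hw hwnz hdev)

/-- Strict 𝓗∞ performance of the Riccati state-feedback gain
(time-domain form of Theorem 2). -/
theorem hinf_strict_performance {n m p : ℕ}
    (A : Matrix (Fin n) (Fin n) ℝ) (B : Matrix (Fin n) (Fin m) ℝ)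
    (Bw : Matrix (Fin n) (Fin p) ℝ)
    (Q : Matrix (Fin n) (Fin n) ℝ) (hQ : Q.IsSymm)
    (R : Matrix (Fin m) (Fin m) ℝ) (hR : R.PosDef) (hRsymm : R.IsSymm)
    (γ : ℝ) (hγ : 0 < γ)
    (Ps : Matrix (Fin n) (Fin n) ℝ) (hPs : Ps.IsSymm)
    (hARE : Aᵀ * Ps + Ps * A + Q - Ps * B * R⁻¹ * Bᵀ * Ps
      + (γ ^ 2)⁻¹ • (Ps * Bw * Bwᵀ * Ps) = 0)
    (x : ℝ → Fin n → ℝ) (w : ℝ → Fin p → ℝ)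
    (hw : Continuous w)
    (hwnz : 0 < ∫ t in Set.Ioi (0 : ℝ), w t ⬝ᵥ w t)
    (hderiv : ∀ t : ℝ, 0 ≤ t →
      HasDerivAt x ((A + B * (-(R⁻¹ * Bᵀ * Ps))) *ᵥ x t + Bw *ᵥ w t) t)
    (hx0 : x 0 = 0)
    (hlim : Tendsto x atTop (nhds 0))
    (hint_x : IntegrableOn (fun t => x t ⬝ᵥ x t) (Set.Ioi (0 : ℝ)))
    (hint_w : IntegrableOn (fun t => w t ⬝ᵥ w t) (Set.Ioi (0 : ℝ))) :
    (let Ks := -(R⁻¹ * Bᵀ * Ps)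
     let Qs := Q + Ksᵀ * R * Ks
     (∫ t in Set.Ioi (0 : ℝ), (x t ⬝ᵥ Qs *ᵥ x t - γ ^ 2 * (w t ⬝ᵥ w t))) < 0) :=
  hinf_strict_performance_general A B Bw Q R hR γ hγ Ps hPs hARE x w hw hwnz hderiv hx0 hlim hint_x
    hint_w
end
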